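/- arXiv:1604.03213 — 5 statements merged into one kernel-verified Lean document; each statement's English description precedes it below -/
import Mathlib

section
/- In a complete Hopf algebra, the exponential series exp and the logarithm series log define mutually inverse bijections between the set of primitive elements and the set of group-like elements. -/
open Finset Polynomial

section ExpLogAux

variable (K : Type*) [Field K] [CharZero K]

noncomputable def Eexp (N : ℕ) : K[X] := ∑ j ∈ range N, ((j.factorial : K)⁻¹) • X ^ j

noncomputable def Lg (m : ℕ) : K[X] := ∑ j ∈ range m, (((-1 : K) ^ j) / (j + 1)) • X ^ (j + 1)

lemma Eexp_coeff_zero (N : ℕ) : (Eexp K (N + 1)).coeff 0 = 1 := by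
  rw [Eexp, finset_sum_coeff]
  rw [Finset.sum_eq_single 0]
  · simp
  · intro j hj hj0
    simp [coeff_smul, coeff_X_pow, eq_comm, hj0]
  · simp

lemma Lg_coeff_zero (m : ℕ) : (Lg K m).coeff 0 = 0 := by
  rw [Lg, finset_sum_coeff]
  refine Finset.sum_eq_zero fun j hj => ?_
  simp [coeff_smul, coeff_X_pow]

lemma derivative_Eexp (N : ℕ) : derivative (Eexp K (N + 1)) = Eexp K N := by
  rw [Eexp, map_sum, Finset.sum_range_succ']
  have h0 : derivative (((Nat.factorial 0 : K)⁻¹) • (X : K[X]) ^ 0) = 0 := by simp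
  rw [h0, add_zero, Eexp]
  refine Finset.sum_congr rfl fun j _ => ?_
  rw [derivative_smul, derivative_X_pow]
  simp only [Nat.add_sub_cancel, Nat.cast_add, Nat.cast_one]
  rw [smul_eq_C_mul, smul_eq_C_mul, ← mul_assoc, ← C_mul]
  congr 1
  have hj : ((j : K) + 1) ≠ 0 := Nat.cast_add_one_ne_zero j
  rw [Nat.factorial_succ, Nat.cast_mul, mul_inv]
  push_cast
  field_simp

lemma derivative_Lg (m : ℕ) :
    derivative (Lg K m) = ∑ j ∈ range m, ((-1 : K) ^ j) • (X : K[X]) ^ j := by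
  rw [Lg, map_sum]
  refine Finset.sum_congr rfl fun j _ => ?_
  rw [derivative_smul, derivative_X_pow]
  simp only [Nat.add_sub_cancel, Nat.cast_add, Nat.cast_one]
  rw [smul_eq_C_mul, smul_eq_C_mul, ← mul_assoc, ← C_mul]
  congr 1
  have hj : ((j : K) + 1) ≠ 0 := Nat.cast_add_one_ne_zero j
  field_simp

lemma geo_mul (m : ℕ) :
    (∑ j ∈ range m, ((-1 : K) ^ j) • (X : K[X]) ^ j) * (X + 1) = 1 - (-X) ^ m := by
  have h1 : ∑ j ∈ range m, ((-1 : K) ^ j) • (X : K[X]) ^ j = ∑ j ∈ range m, (-X : K[X]) ^ j := by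
    refine Finset.sum_congr rfl fun j _ => ?_
    rw [smul_eq_C_mul, map_pow, map_neg, map_one, ← neg_pow]
  have h2 := geom_sum_mul (-X : K[X]) m
  rw [h1]
  linear_combination -h2

lemma key_coeff (m n : ℕ) (hn : n ≤ m) :
    ((Lg K m).comp (Eexp K (m + 1) - 1)).coeff n = (X : K[X]).coeff n := by
  set E : K[X] := Eexp K (m + 1) with hE
  set f : K[X] := (Lg K m).comp (E - 1) with hf
  have hE0 : (E - 1).coeff 0 = 0 := by
    rw [coeff_sub, hE, Eexp_coeff_zero]; simp
  have hdvd : (X : K[X]) ^ m ∣ (derivative f - 1) := by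
    have hcomp : derivative f = derivative (E - 1) * (derivative (Lg K m)).comp (E - 1) :=
      derivative_comp _ _
    have h1 : derivative (E - 1) = Eexp K m := by
      rw [derivative_sub, derivative_one, sub_zero, hE, derivative_Eexp]
    have hgeo : (derivative (Lg K m)).comp (E - 1) * E = 1 - (-(E - 1)) ^ m := by
      rw [derivative_Lg]
      have := congrArg (fun p => p.comp (E - 1)) (geo_mul K m)
      simp only [mul_comp, add_comp, X_comp, one_comp, sub_comp, neg_comp, pow_comp] at this
      rw [sub_add_cancel] at this
      exact this
    have hEsplit : Eexp K m = E - C ((m.factorial : K)⁻¹) * X ^ m := by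
      have : E = Eexp K m + C ((m.factorial : K)⁻¹) * X ^ m := by
        rw [hE, Eexp, Eexp, Finset.sum_range_succ, smul_eq_C_mul]
      rw [this]; ring
    rw [hcomp, h1, hEsplit, sub_mul, mul_comm (E : K[X])]
    have hd1 : (X : K[X]) ^ m ∣ (-(E - 1)) ^ m :=
      pow_dvd_pow_of_dvd (by rw [X_dvd_iff, coeff_neg, hE0, neg_zero]) m
    have hd2 : (X : K[X]) ^ m ∣ C ((m.factorial : K)⁻¹) * X ^ m * (derivative (Lg K m)).comp (E - 1) := by
      exact ((dvd_mul_left _ _).mul_right _)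
    rw [hgeo]
    have heq : 1 - (-(E - 1)) ^ m - C ((m.factorial : K)⁻¹) * X ^ m * (derivative (Lg K m)).comp (E - 1) - 1
        = -((-(E - 1)) ^ m) - C ((m.factorial : K)⁻¹) * X ^ m * (derivative (Lg K m)).comp (E - 1) := by
      ring
    rw [heq]
    exact dvd_sub (dvd_neg.mpr hd1) hd2
  have hdf : ∀ k < m, (derivative f).coeff k = (if k = 0 then 1 else 0) := by
    intro k hk
    have := (X_pow_dvd_iff.mp hdvd) k hk
    rw [coeff_sub, sub_eq_zero] at this
    rw [this, coeff_one]
  have h0 : f.coeff 0 = 0 := by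
    rw [coeff_zero_eq_eval_zero, hf, eval_comp, ← coeff_zero_eq_eval_zero, hE0,
      ← coeff_zero_eq_eval_zero, Lg_coeff_zero]
  rcases n with _ | k
  · simpa using h0
  · have hk : k < m := hn
    have hne : ((k : K) + 1) ≠ 0 := Nat.cast_add_one_ne_zero k
    have hder := coeff_derivative f k
    rw [hdf k hk] at hder
    have hfk : f.coeff (k + 1) = if k = 0 then 1 else 0 := by
      rcases eq_or_ne k 0 with rfl | hk0
      · simp only [if_pos rfl] at hder ⊢
        simpa using hder.symm
      · simp only [if_neg hk0] at hder ⊢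
        rcases mul_eq_zero.mp hder.symm with h | h
        · exact h
        · exact absurd h hne
    rw [hfk, coeff_X]
    rcases eq_or_ne k 0 with rfl | hk0
    · simp
    · simp [hk0, show ¬(1 = k + 1) by omega]


section Filt
variable {K R : Type*} [Field K] [CharZero K] [Ring R] [Algebra K R]
variable {S : ℕ → Submodule K R}

lemma filt_eq_zero (hsep : (⨅ m, S m) = ⊥) {t : R} (h : ∀ m, t ∈ S m) : t = 0 := by
  have : t ∈ (⨅ m, S m) := Submodule.mem_iInf _ |>.2 h
  rw [hsep] at this
  simpa using this

lemma filt_top (h0 : S 0 = ⊤) (a : R) : a ∈ S 0 := by rw [h0]; trivial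

lemma filt_mul_left (h0 : S 0 = ⊤)
    (hmul : ∀ {m l : ℕ} (a b : R), a ∈ S m → b ∈ S l → a * b ∈ S (m + l))
    {m : ℕ} (a : R) {b : R} (hb : b ∈ S m) : a * b ∈ S m := by
  have := hmul a b (filt_top h0 a) hb
  simpa using this

lemma filt_mul_right (h0 : S 0 = ⊤)
    (hmul : ∀ {m l : ℕ} (a b : R), a ∈ S m → b ∈ S l → a * b ∈ S (m + l))
    {m : ℕ} (a : R) {b : R} (hb : b ∈ S m) : b * a ∈ S m := by
  have := hmul b a hb (filt_top h0 a)
  simpa using this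

lemma filt_pow (h0 : S 0 = ⊤)
    (hmul : ∀ {m l : ℕ} (a b : R), a ∈ S m → b ∈ S l → a * b ∈ S (m + l))
    {x : R} (hx : x ∈ S 1) : ∀ n, x ^ n ∈ S n := by
  intro n
  induction n with
  | zero => simpa using filt_top h0 1
  | succ n ih => rw [pow_succ]; exact hmul _ _ ih hx

lemma filt_perturb (h0 : S 0 = ⊤)
    (hmul : ∀ {m l : ℕ} (a b : R), a ∈ S m → b ∈ S l → a * b ∈ S (m + l))
    {m : ℕ} {a e : R} (he : e ∈ S m) : ∀ k, (a + e) ^ k - a ^ k ∈ S m := by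
  intro k
  induction k with
  | zero => simpa using zero_mem _
  | succ k ih =>
    have hrw : (a + e) ^ (k + 1) - a ^ (k + 1)
        = ((a + e) ^ k - a ^ k) * (a + e) + a ^ k * e := by
      rw [pow_succ, pow_succ]
      noncomm_ring
    rw [hrw]
    exact add_mem (filt_mul_right h0 hmul _ ih) (filt_mul_left h0 hmul _ he)

lemma filt_powdiff (h0 : S 0 = ⊤)
    (hmul : ∀ {m l : ℕ} (a b : R), a ∈ S m → b ∈ S l → a * b ∈ S (m + l))
    {u v : R} (hu : u ∈ S 1) (hv : v ∈ S 1) {m : ℕ} (h : u - v ∈ S m) :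
    ∀ k, u ^ (k + 1) - v ^ (k + 1) ∈ S (m + k) := by
  intro k
  induction k with
  | zero => simpa using h
  | succ k ih =>
    have hrw : u ^ (k + 2) - v ^ (k + 2)
        = (u ^ (k + 1) - v ^ (k + 1)) * u + v ^ (k + 1) * (u - v) := by
      rw [pow_succ, pow_succ]
      noncomm_ring
    rw [hrw]
    have ha := hmul _ _ ih hu
    have hb := hmul _ _ (filt_pow h0 hmul hv (k + 1)) h
    have e1 : m + k + 1 = m + (k + 1) := by omega
    have e2 : k + 1 + m = m + (k + 1) := by omega
    rw [e1] at ha; rw [e2] at hb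
    exact add_mem ha hb

lemma filt_aeval_high (h0 : S 0 = ⊤)
    (hanti : ∀ {m l : ℕ}, m ≤ l → S l ≤ S m)
    (hmul : ∀ {m l : ℕ} (a b : R), a ∈ S m → b ∈ S l → a * b ∈ S (m + l))
    {x : R} (hx : x ∈ S 1) {m : ℕ} (q : Polynomial K)
    (hq : ∀ n ≤ m, q.coeff n = 0) : aeval x q ∈ S (m + 1) := by
  rw [Polynomial.aeval_eq_sum_range]
  refine sum_mem fun i _ => ?_
  by_cases hi : i ≤ m
  · rw [hq i hi, zero_smul]; exact zero_mem _
  · exact Submodule.smul_mem _ _ (hanti (by omega) (filt_pow h0 hmul hx i))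

lemma filt_exp_inj (h0 : S 0 = ⊤)
    (hanti : ∀ {m l : ℕ}, m ≤ l → S l ≤ S m)
    (hmul : ∀ {m l : ℕ} (a b : R), a ∈ S m → b ∈ S l → a * b ∈ S (m + l))
    (hsep : (⨅ m, S m) = ⊥)
    {w₁ w₂ : R} (h1 : w₁ ∈ S 1) (h2 : w₂ ∈ S 1)
    (h : ∀ m, (∑ j ∈ range m, ((j.factorial : K)⁻¹) • w₁ ^ j)
        - (∑ j ∈ range m, ((j.factorial : K)⁻¹) • w₂ ^ j) ∈ S m) : w₁ = w₂ := by
  have key : ∀ m, w₁ - w₂ ∈ S (m + 1) := by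
    intro m
    induction m with
    | zero => exact sub_mem h1 h2
    | succ m ih =>
      have hD := h (m + 2)
      have hsum : (∑ j ∈ range (m + 2), ((j.factorial : K)⁻¹) • w₁ ^ j)
          - (∑ j ∈ range (m + 2), ((j.factorial : K)⁻¹) • w₂ ^ j)
          = (w₁ - w₂) + ∑ j ∈ range m, (((j + 2).factorial : K)⁻¹) • (w₁ ^ (j + 2) - w₂ ^ (j + 2)) := by
        rw [← Finset.sum_sub_distrib]
        simp only [← smul_sub]
        rw [Finset.sum_range_succ' (fun j => ((j.factorial : K)⁻¹) • (w₁ ^ j - w₂ ^ j)) (m + 1),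
          Finset.sum_range_succ' (fun j => (((j + 1).factorial : K)⁻¹) • (w₁ ^ (j + 1) - w₂ ^ (j + 1))) m]
        simp [Nat.factorial]
        abel
      rw [hsum] at hD
      have hrest : ∑ j ∈ range m, (((j + 2).factorial : K)⁻¹) • (w₁ ^ (j + 2) - w₂ ^ (j + 2)) ∈ S (m + 2) := by
        refine sum_mem fun j _ => Submodule.smul_mem _ _ ?_
        have := filt_powdiff h0 hmul h1 h2 ih (j + 1)
        exact hanti (by omega) this
      have := sub_mem hD hrest
      simpa using this
  refine sub_eq_zero.mp (filt_eq_zero hsep fun m => hanti (Nat.le_succ m) (key m))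

lemma filt_log_inj (h0 : S 0 = ⊤)
    (hanti : ∀ {m l : ℕ}, m ≤ l → S l ≤ S m)
    (hmul : ∀ {m l : ℕ} (a b : R), a ∈ S m → b ∈ S l → a * b ∈ S (m + l))
    (hsep : (⨅ m, S m) = ⊥)
    (L : R → R)
    (hL : ∀ y : R, y - 1 ∈ S 1 → ∀ m : ℕ,
      L y - ∑ j ∈ range m, (((-1 : K) ^ j) / (j + 1)) • (y - 1) ^ (j + 1) ∈ S (m + 1))
    {y y' : R} (hy : y - 1 ∈ S 1) (hy' : y' - 1 ∈ S 1) (heq : L y = L y') : y = y' := by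
  have key : ∀ m, y - y' ∈ S (m + 1) := by
    intro m
    induction m with
    | zero =>
      have := sub_mem hy hy'
      simpa using this
    | succ m ih =>
      have hD : (∑ j ∈ range (m + 1), (((-1 : K) ^ j) / (j + 1)) • (y - 1) ^ (j + 1))
          - (∑ j ∈ range (m + 1), (((-1 : K) ^ j) / (j + 1)) • (y' - 1) ^ (j + 1)) ∈ S (m + 2) := by
        have hA := hL y hy (m + 1)
        have hB := hL y' hy' (m + 1)
        have := sub_mem hB hA
        rw [heq] at this
        simpa using this
      have hsum : (∑ j ∈ range (m + 1), (((-1 : K) ^ j) / (j + 1)) • (y - 1) ^ (j + 1))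
          - (∑ j ∈ range (m + 1), (((-1 : K) ^ j) / (j + 1)) • (y' - 1) ^ (j + 1))
          = (y - y') + ∑ j ∈ range m, (((-1 : K) ^ (j + 1)) / (j + 2)) • ((y - 1) ^ (j + 2) - (y' - 1) ^ (j + 2)) := by
        rw [← Finset.sum_sub_distrib]
        simp only [← smul_sub]
        rw [Finset.sum_range_succ' (fun j => (((-1 : K) ^ j) / (j + 1)) • ((y - 1) ^ (j + 1) - (y' - 1) ^ (j + 1))) m]
        rw [add_comm]
        congr 1
        · norm_num
        · refine Finset.sum_congr rfl fun j _ => ?_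
          push_cast
          norm_num
          ring_nf
      rw [hsum] at hD
      have hrest : ∑ j ∈ range m, (((-1 : K) ^ (j + 1)) / (j + 2)) • ((y - 1) ^ (j + 2) - (y' - 1) ^ (j + 2)) ∈ S (m + 2) := by
        refine sum_mem fun j _ => Submodule.smul_mem _ _ ?_
        have hd : (y - 1) - (y' - 1) ∈ S (m + 1) := by simpa using ih
        have := filt_powdiff h0 hmul hy hy' hd (j + 1)
        exact hanti (by omega) this
      have := sub_mem hD hrest
      simpa using this
  refine sub_eq_zero.mp (filt_eq_zero hsep fun m => hanti (Nat.le_succ m) (key m))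

lemma filt_expmul (h0 : S 0 = ⊤)
    (hanti : ∀ {m l : ℕ}, m ≤ l → S l ≤ S m)
    (hmul : ∀ {m l : ℕ} (a b : R), a ∈ S m → b ∈ S l → a * b ∈ S (m + l))
    {u v : R} (huv : u * v = v * u) (hu : u ∈ S 1) (hv : v ∈ S 1) (m : ℕ) :
    (∑ j ∈ range m, ((j.factorial : K)⁻¹) • (u + v) ^ j)
      - (∑ j ∈ range m, ((j.factorial : K)⁻¹) • u ^ j)
          * (∑ j ∈ range m, ((j.factorial : K)⁻¹) • v ^ j) ∈ S m := by
  have hterm : ∀ j : ℕ, ((j.factorial : K)⁻¹) • (u + v) ^ j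
      = ∑ i ∈ range (j + 1),
          (((i.factorial : K)⁻¹) * ((((j - i).factorial : K))⁻¹)) • (u ^ i * v ^ (j - i)) := by
    intro j
    rw [Commute.add_pow huv, Finset.smul_sum]
    refine Finset.sum_congr rfl fun i hi => ?_
    have hij : i ≤ j := Nat.lt_succ_iff.mp (Finset.mem_range.mp hi)
    have hc : u ^ i * v ^ (j - i) * (j.choose i : R)
        = ((j.choose i : K)) • (u ^ i * v ^ (j - i)) := by
      rw [Algebra.smul_def, Algebra.commutes, map_natCast]
    rw [hc, smul_smul]
    congr 1
    have hfac := Nat.choose_mul_factorial_mul_factorial hij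
    have hne : ∀ n : ℕ, (n.factorial : K) ≠ 0 :=
      fun n => Nat.cast_ne_zero.mpr n.factorial_ne_zero
    have : (j.factorial : K) = (j.choose i : K) * (i.factorial : K) * ((j - i).factorial : K) := by
      rw [← Nat.cast_mul, ← Nat.cast_mul, hfac]
    rw [this, mul_assoc]
    have hch : (j.choose i : K) ≠ 0 :=
      Nat.cast_ne_zero.mpr (Nat.choose_pos hij).ne'
    field_simp
  have hL1 : (∑ j ∈ range m, ((j.factorial : K)⁻¹) • (u + v) ^ j)
      = ∑ p ∈ (range m ×ˢ range m).filter (fun p => p.1 + p.2 < m),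
          (((p.1.factorial : K)⁻¹) * (((p.2.factorial : K))⁻¹)) • (u ^ p.1 * v ^ p.2) := by
    rw [Finset.sum_congr rfl fun j (_ : j ∈ range m) => hterm j, Finset.sum_sigma']
    refine Finset.sum_nbij' (fun s => (s.2, s.1 - s.2)) (fun p => ⟨p.1 + p.2, p.1⟩)
      ?_ ?_ ?_ ?_ ?_
    · rintro ⟨j, i⟩ hs
      simp only [Finset.mem_sigma, Finset.mem_range, Finset.mem_filter, Finset.mem_product] at hs ⊢
      omega
    · rintro ⟨a, b⟩ hp
      simp only [Finset.mem_sigma, Finset.mem_range, Finset.mem_filter, Finset.mem_product] at hp ⊢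
      omega
    · rintro ⟨j, i⟩ hs
      simp only [Finset.mem_sigma, Finset.mem_range] at hs
      have : i ≤ j := Nat.lt_succ_iff.mp hs.2
      simp only [Sigma.mk.inj_iff]
      constructor
      · omega
      · exact heq_of_eq rfl
    · rintro ⟨a, b⟩ hp
      simp
    · rintro ⟨j, i⟩ hs
      rfl
  have hL2 : (∑ j ∈ range m, ((j.factorial : K)⁻¹) • u ^ j)
          * (∑ j ∈ range m, ((j.factorial : K)⁻¹) • v ^ j)
      = ∑ p ∈ range m ×ˢ range m,
          (((p.1.factorial : K)⁻¹) * (((p.2.factorial : K))⁻¹)) • (u ^ p.1 * v ^ p.2) := by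
    rw [Finset.sum_mul_sum]
    rw [Finset.sum_product]
    refine Finset.sum_congr rfl fun i _ => Finset.sum_congr rfl fun k _ => ?_
    rw [smul_mul_smul_comm]
  rw [hL1, hL2]
  rw [← Finset.sum_filter_add_sum_filter_not (range m ×ˢ range m) (fun p => p.1 + p.2 < m)]
  have hrw : ∀ X Y : R, X - (X + Y) = -Y := fun X Y => by abel
  rw [hrw]
  refine neg_mem (sum_mem fun p hp => Submodule.smul_mem _ _ ?_)
  simp only [Finset.mem_filter, Finset.mem_product, Finset.mem_range, not_lt] at hp
  have := hmul _ _ (filt_pow h0 hmul hu p.1) (filt_pow h0 hmul hv p.2)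
  exact hanti hp.2 this

end Filt

end ExpLogAux

/-- In a complete Hopf algebra `A` (modelled by a filtered algebra `A` with a
complete separated exhaustive multiplicative filtration `F`, a comultiplication
`Δ : A → A ⊗̂ A` valued in a filtered algebra `B` modelling the completed tensor
square via the two commuting inclusions `ι₁ = (· ⊗̂ 1)` and `ι₂ = (1 ⊗̂ ·)`, and a
counit `ε`), the exponential and logarithm series define mutually inverse
bijections between the set of primitive elements and the set of group-like
elements. -/
theorem exp_log_bijOn_primitives_groupLikes
    (K A B : Type*) [Field K] [CharZero K]
    [Ring A] [Algebra K A] [Ring B] [Algebra K B]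
    (F : ℕ → Submodule K A) (G : ℕ → Submodule K B)
    -- filtration axioms on `A`
    (hF0 : F 0 = ⊤)
    (hFanti : ∀ {m l : ℕ}, m ≤ l → F l ≤ F m)
    (hFmul : ∀ {m l : ℕ} (a b : A), a ∈ F m → b ∈ F l → a * b ∈ F (m + l))
    (hFsep : (⨅ m, F m) = ⊥)
    -- filtration axioms on `B`
    (hG0 : G 0 = ⊤)
    (hGanti : ∀ {m l : ℕ}, m ≤ l → G l ≤ G m)
    (hGmul : ∀ {m l : ℕ} (a b : B), a ∈ G m → b ∈ G l → a * b ∈ G (m + l))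
    (hGsep : (⨅ m, G m) = ⊥)
    -- Hopf-algebra data: comultiplication, the two inclusions `A → A ⊗̂ A`, counit
    (Δ ι₁ ι₂ : A →ₐ[K] B) (ε : A →ₐ[K] K)
    (hcomm : ∀ a b : A, ι₁ a * ι₂ b = ι₂ b * ι₁ a)
    (hΔF : ∀ m : ℕ, ∀ a ∈ F m, Δ a ∈ G m)
    (hι₁F : ∀ m : ℕ, ∀ a ∈ F m, ι₁ a ∈ G m)
    (hι₂F : ∀ m : ℕ, ∀ a ∈ F m, ι₂ a ∈ G m)
    (hεF : ∀ a ∈ F 1, ε a = 0)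
    (haug : ∀ a : A, a - algebraMap K A (ε a) ∈ F 1)
    -- the exponential and logarithm series, characterized by their partial sums
    (expA logA : A → A)
    (hexp : ∀ x ∈ F 1, ∀ m : ℕ,
      expA x - ∑ j ∈ range m, ((j.factorial : K)⁻¹) • x ^ j ∈ F m)
    (hlog : ∀ y : A, y - 1 ∈ F 1 → ∀ m : ℕ,
      logA y - ∑ j ∈ range m, (((-1 : K) ^ j) / (j + 1)) • (y - 1) ^ (j + 1)
        ∈ F (m + 1)) :
    Set.BijOn expA
        {x : A | x ∈ F 1 ∧ Δ x = ι₁ x + ι₂ x}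
        {y : A | Δ y = ι₁ y * ι₂ y ∧ ε y = 1} ∧
      Set.InvOn logA expA
        {x : A | x ∈ F 1 ∧ Δ x = ι₁ x + ι₂ x}
        {y : A | Δ y = ι₁ y * ι₂ y ∧ ε y = 1} := by
    classical
  have hexp1 : ∀ x ∈ F 1, expA x - 1 ∈ F 1 := by
    intro x hx
    have := hexp x hx 1
    simpa using this
  have hεexp : ∀ x ∈ F 1, ε (expA x) = 1 := by
    intro x hx
    have h := hεF _ (hexp1 x hx)
    rw [map_sub, map_one, sub_eq_zero] at h
    exact h
  have hlogF1 : ∀ y : A, y - 1 ∈ F 1 → logA y ∈ F 1 := by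
    intro y hy
    have := hlog y hy 0
    simpa using this
  have hkey : ∀ x ∈ F 1, ∀ m : ℕ,
      (Δ (expA x) - ι₁ (expA x) * ι₂ (expA x))
        - ((∑ j ∈ range m, ((j.factorial : K)⁻¹) • (Δ x) ^ j)
            - (∑ j ∈ range m, ((j.factorial : K)⁻¹) • (ι₁ x + ι₂ x) ^ j)) ∈ G m := by
    intro x hx m
    have hx' := hexp x hx m
    have h1 : Δ (expA x) - ∑ j ∈ range m, ((j.factorial : K)⁻¹) • (Δ x) ^ j ∈ G m := by
      have := hΔF m _ hx'
      simpa only [map_sub, map_sum, map_smul, map_pow] using this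
    have h2 : ι₁ (expA x) - ∑ j ∈ range m, ((j.factorial : K)⁻¹) • (ι₁ x) ^ j ∈ G m := by
      have := hι₁F m _ hx'
      simpa only [map_sub, map_sum, map_smul, map_pow] using this
    have h3 : ι₂ (expA x) - ∑ j ∈ range m, ((j.factorial : K)⁻¹) • (ι₂ x) ^ j ∈ G m := by
      have := hι₂F m _ hx'
      simpa only [map_sub, map_sum, map_smul, map_pow] using this
    have h4 : ι₁ (expA x) * ι₂ (expA x)
        - (∑ j ∈ range m, ((j.factorial : K)⁻¹) • (ι₁ x) ^ j)
            * (∑ j ∈ range m, ((j.factorial : K)⁻¹) • (ι₂ x) ^ j) ∈ G m := by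
      have hrw : ι₁ (expA x) * ι₂ (expA x)
          - (∑ j ∈ range m, ((j.factorial : K)⁻¹) • (ι₁ x) ^ j)
              * (∑ j ∈ range m, ((j.factorial : K)⁻¹) • (ι₂ x) ^ j)
          = (ι₁ (expA x) - ∑ j ∈ range m, ((j.factorial : K)⁻¹) • (ι₁ x) ^ j) * ι₂ (expA x)
            + (∑ j ∈ range m, ((j.factorial : K)⁻¹) • (ι₁ x) ^ j)
                * (ι₂ (expA x) - ∑ j ∈ range m, ((j.factorial : K)⁻¹) • (ι₂ x) ^ j) := by
        noncomm_ring
      rw [hrw]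
      exact add_mem (filt_mul_right hG0 hGmul _ h2) (filt_mul_left hG0 hGmul _ h3)
    have h5 := filt_expmul hG0 hGanti hGmul (hcomm x x) (hι₁F 1 x hx) (hι₂F 1 x hx) m
    have hcomb := add_mem (sub_mem h1 h4) h5
    convert hcomb using 1
    abel
  have hgrouplike : ∀ x, x ∈ F 1 → Δ x = ι₁ x + ι₂ x →
      Δ (expA x) = ι₁ (expA x) * ι₂ (expA x) := by
    intro x hx1 hx2
    have hall : ∀ m, Δ (expA x) - ι₁ (expA x) * ι₂ (expA x) ∈ G m := by
      intro m
      have := hkey x hx1 m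
      rw [hx2, sub_self, sub_zero] at this
      exact this
    exact sub_eq_zero.mp (filt_eq_zero hGsep hall)
  have hprimitive : ∀ x, x ∈ F 1 → Δ (expA x) = ι₁ (expA x) * ι₂ (expA x) →
      Δ x = ι₁ x + ι₂ x := by
    intro x hx1 hx2
    refine filt_exp_inj hG0 hGanti hGmul hGsep (hΔF 1 x hx1)
      (add_mem (hι₁F 1 x hx1) (hι₂F 1 x hx1)) ?_
    intro m
    have := hkey x hx1 m
    rw [hx2, sub_self, zero_sub] at this
    simpa using neg_mem this
  have hleft : ∀ x ∈ F 1, logA (expA x) = x := by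
    intro x hx
    have hy1 : expA x - 1 ∈ F 1 := hexp1 x hx
    have key : ∀ m : ℕ, logA (expA x) - x ∈ F (m + 1) := by
      intro m
      have step1 := hlog (expA x) hy1 m
      set Pp : A := aeval x (Eexp K (m + 1)) with hPp
      have hPsum : Pp = ∑ j ∈ range (m + 1), ((j.factorial : K)⁻¹) • x ^ j := by
        rw [hPp, Eexp, map_sum]
        simp only [map_smul, map_pow, aeval_X]
      have hP : expA x - Pp ∈ F (m + 1) := by rw [hPsum]; exact hexp x hx (m + 1)
      have step2 : (∑ j ∈ range m, (((-1 : K) ^ j) / (j + 1)) • (expA x - 1) ^ (j + 1))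
          - (∑ j ∈ range m, (((-1 : K) ^ j) / (j + 1)) • (Pp - 1) ^ (j + 1)) ∈ F (m + 1) := by
        rw [← Finset.sum_sub_distrib]
        refine sum_mem fun j _ => ?_
        rw [← smul_sub]
        refine Submodule.smul_mem _ _ ?_
        have hsplit : expA x - 1 = (Pp - 1) + (expA x - Pp) := by abel
        rw [hsplit]
        exact filt_perturb hF0 hFmul hP (j + 1)
      have step3 : (∑ j ∈ range m, (((-1 : K) ^ j) / (j + 1)) • (Pp - 1) ^ (j + 1))
          = aeval x ((Lg K m).comp (Eexp K (m + 1) - 1)) := by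
        rw [aeval_comp, map_sub, map_one, ← hPp, Lg, map_sum]
        simp only [map_smul, map_pow, aeval_X]
      have step4 : aeval x ((Lg K m).comp (Eexp K (m + 1) - 1)) - x ∈ F (m + 1) := by
        have hrw : aeval x ((Lg K m).comp (Eexp K (m + 1) - 1)) - x
            = aeval x ((Lg K m).comp (Eexp K (m + 1) - 1) - X) := by
          rw [map_sub, aeval_X]
        rw [hrw]
        refine filt_aeval_high hF0 hFanti hFmul hx _ fun n hn => ?_
        rw [Polynomial.coeff_sub, key_coeff K m n hn, sub_self]
      have hfinal := add_mem (add_mem step1 step2) step4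
      convert hfinal using 1
      rw [← step3]
      abel
    exact sub_eq_zero.mp (filt_eq_zero hFsep fun m => hFanti (Nat.le_succ m) (key m))
  have hright : ∀ y : A, y - 1 ∈ F 1 → expA (logA y) = y := by
    intro y hy1
    have hx : logA y ∈ F 1 := hlogF1 y hy1
    have h1 : logA (expA (logA y)) = logA y := hleft _ hx
    exact filt_log_inj hF0 hFanti hFmul hFsep logA hlog (hexp1 _ hx) hy1 h1
  have hGL1 : ∀ y : A, ε y = 1 → y - 1 ∈ F 1 := by
    intro y hy
    have := haug y
    rwa [hy, map_one] at this
  have hlogP : ∀ y ∈ {y : A | Δ y = ι₁ y * ι₂ y ∧ ε y = 1},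
      logA y ∈ {x : A | x ∈ F 1 ∧ Δ x = ι₁ x + ι₂ x} := by
    intro y hy
    have hy1 := hGL1 y hy.2
    have hx := hlogF1 y hy1
    refine ⟨hx, ?_⟩
    apply hprimitive _ hx
    rw [hright y hy1]
    exact hy.1
  refine ⟨⟨?_, ?_, ?_⟩, ?_, ?_⟩
  · intro x hx
    exact ⟨hgrouplike x hx.1 hx.2, hεexp x hx.1⟩
  · intro a ha b hb hab
    have := hleft a ha.1
    rw [hab, hleft b hb.1] at this
    exact this.symm
  · intro y hy
    exact ⟨logA y, hlogP y hy, hright y (hGL1 y hy.2)⟩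
  · intro x hx
    exact hleft x hx.1
  · intro y hy
    exact hright y (hGL1 y hy.2)
end

section
/- The degree-k leading term of a Magnus expansion on Γ_k F_n is independent of the choice of Magnus expansion: if θ and θ' are two Magnus expansions of F_n and y ∈ Γ_k F_n, then the degree-k components of θ(y) and θ'(y) agree. -/
section MagnusAux

open scoped commutatorElement

variable {K A : Type*} [Field K] [Ring A] [Algebra K A] {n : ℕ}
  (F : ℕ → Submodule K A)

/-- image of any group element is in `F 0 = ⊤`. -/
private lemma magnus_memF0 (hF0 : F 0 = ⊤) (a : A) : a ∈ F 0 := by simp [hF0]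

/-- product membership with index adjustment. -/
private lemma magnus_mul_mem
    (hFanti : ∀ {m l : ℕ}, m ≤ l → F l ≤ F m)
    (hFmul : ∀ {m l : ℕ} (a b : A), a ∈ F m → b ∈ F l → a * b ∈ F (m + l))
    {m l r : ℕ} (a b : A) (ha : a ∈ F m) (hb : b ∈ F l) (h : r ≤ m + l) :
    a * b ∈ F r :=
  hFanti h (hFmul a b ha hb)

private lemma magnus_inv_one (θ : FreeGroup (Fin n) →* A) (y : FreeGroup (Fin n)) :
    θ y * θ y⁻¹ = 1 := by
  rw [← map_mul, mul_inv_cancel, map_one]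

private lemma magnus_inv_one' (θ : FreeGroup (Fin n) →* A) (y : FreeGroup (Fin n)) :
    θ y⁻¹ * θ y = 1 := by
  rw [← map_mul, inv_mul_cancel, map_one]

/-- Key commutator identity: `θ⁅y,z⁆ - 1 = (θy θz - θz θy) (θ y⁻¹ θ z⁻¹)`. -/
private lemma magnus_comm_eq (θ : FreeGroup (Fin n) →* A) (y z : FreeGroup (Fin n)) :
    θ ⁅y, z⁆ - 1 = (θ y * θ z - θ z * θ y) * (θ y⁻¹ * θ z⁻¹) := by
  have hy := magnus_inv_one θ y
  have hz := magnus_inv_one θ z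
  have e : (θ y * θ z - θ z * θ y) * (θ y⁻¹ * θ z⁻¹) =
      θ y * θ z * θ y⁻¹ * θ z⁻¹ - θ z * (θ y * θ y⁻¹) * θ z⁻¹ := by noncomm_ring
  rw [e, hy, mul_one, hz, commutatorElement_def, map_mul, map_mul, map_mul]

/-- `θ y - 1 ∈ F (k+1)` for `y ∈ Γ_{k+1} = lowerCentralSeries k`. -/
private lemma magnus_P
    (hF0 : F 0 = ⊤)
    (hFanti : ∀ {m l : ℕ}, m ≤ l → F l ≤ F m)
    (hFmul : ∀ {m l : ℕ} (a b : A), a ∈ F m → b ∈ F l → a * b ∈ F (m + l))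
    (θ : FreeGroup (Fin n) →* A) (hθ1 : ∀ x, θ x - 1 ∈ F 1) :
    ∀ k : ℕ, ∀ y ∈ (⊤ : Subgroup (FreeGroup (Fin n))).lowerCentralSeries k, θ y - 1 ∈ F (k + 1) := by
  intro k
  induction k with
  | zero => exact fun y _ => hθ1 y
  | succ k ih =>
    set m := k + 2 with hm
    let S : Subgroup (FreeGroup (Fin n)) :=
      { carrier := {y | θ y - 1 ∈ F m}
        one_mem' := by simp
        mul_mem' := by
          intro a b ha hb
          have : θ (a * b) - 1 = (θ a - 1) * (θ b - 1) + (θ a - 1) + (θ b - 1) := by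
            rw [map_mul]; noncomm_ring
          rw [Set.mem_setOf_eq, this]
          exact add_mem (add_mem
            (magnus_mul_mem F hFanti hFmul _ _ ha hb (by omega)) ha) hb
        inv_mem' := by
          intro a ha
          have ha' : θ a - 1 ∈ F m := ha
          have hn : (1 : A) - θ a ∈ F m := by simpa using neg_mem ha'
          have : θ a⁻¹ - 1 = θ a⁻¹ * (1 - θ a) := by
            rw [mul_sub, mul_one, magnus_inv_one' θ a]
          rw [Set.mem_setOf_eq, this]
          exact magnus_mul_mem F hFanti hFmul _ _ (magnus_memF0 F hF0 _)
            hn (by omega) }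
    have hle : (⊤ : Subgroup (FreeGroup (Fin n))).lowerCentralSeries (k + 1) ≤ S := by
      show ⁅(⊤ : Subgroup (FreeGroup (Fin n))).lowerCentralSeries k, (⊤ : Subgroup (FreeGroup (Fin n)))⁆ ≤ S
      rw [Subgroup.commutator_le]
      intro y hy z _
      show θ ⁅y, z⁆ - 1 ∈ F m
      rw [magnus_comm_eq]
      have hcomm : θ y * θ z - θ z * θ y
          = (θ y - 1) * (θ z - 1) - (θ z - 1) * (θ y - 1) := by noncomm_ring
      have h1 : θ y * θ z - θ z * θ y ∈ F m := by
        rw [hcomm]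
        exact sub_mem
          (magnus_mul_mem F hFanti hFmul _ _ (ih y hy) (hθ1 z) (by omega))
          (magnus_mul_mem F hFanti hFmul _ _ (hθ1 z) (ih y hy) (by omega))
      exact magnus_mul_mem F hFanti hFmul _ _ h1 (magnus_memF0 F hF0 _) (by omega)
    exact fun y hy => hle hy

/-- `θ y - θ' y ∈ F (k+2)` for `y ∈ lowerCentralSeries k`. -/
private lemma magnus_Q
    (hF0 : F 0 = ⊤)
    (hFanti : ∀ {m l : ℕ}, m ≤ l → F l ≤ F m)
    (hFmul : ∀ {m l : ℕ} (a b : A), a ∈ F m → b ∈ F l → a * b ∈ F (m + l))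
    (θ θ' : FreeGroup (Fin n) →* A)
    (hθ1 : ∀ x, θ x - 1 ∈ F 1) (hθ1' : ∀ x, θ' x - 1 ∈ F 1)
    (hQ0 : ∀ x, θ x - θ' x ∈ F 2) :
    ∀ k : ℕ, ∀ y ∈ (⊤ : Subgroup (FreeGroup (Fin n))).lowerCentralSeries k, θ y - θ' y ∈ F (k + 2) := by
  intro k
  induction k with
  | zero => exact fun y _ => hQ0 y
  | succ k ih =>
    set m := k + 3 with hm
    let T : Subgroup (FreeGroup (Fin n)) :=
      { carrier := {y | θ y - θ' y ∈ F m}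
        one_mem' := by simp
        mul_mem' := by
          intro a b ha hb
          have : θ (a * b) - θ' (a * b) = θ a * (θ b - θ' b) + (θ a - θ' a) * θ' b := by
            rw [map_mul, map_mul]; noncomm_ring
          rw [Set.mem_setOf_eq, this]
          exact add_mem
            (magnus_mul_mem F hFanti hFmul _ _ (magnus_memF0 F hF0 _) hb (by omega))
            (magnus_mul_mem F hFanti hFmul _ _ ha (magnus_memF0 F hF0 _) (by omega))
        inv_mem' := by
          intro a ha
          have ha' : θ a - θ' a ∈ F m := ha
          have hn : θ' a - θ a ∈ F m := by simpa using neg_mem ha'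
          have h1 := magnus_inv_one' θ a
          have h2 := magnus_inv_one θ' a
          have : θ a⁻¹ - θ' a⁻¹ = θ a⁻¹ * ((θ' a - θ a) * θ' a⁻¹) := by
            have e : θ a⁻¹ * ((θ' a - θ a) * θ' a⁻¹)
                = θ a⁻¹ * (θ' a * θ' a⁻¹) - θ a⁻¹ * θ a * θ' a⁻¹ := by noncomm_ring
            rw [e, h1, h2, mul_one, one_mul]
          rw [Set.mem_setOf_eq, this]
          exact magnus_mul_mem F hFanti hFmul _ _ (magnus_memF0 F hF0 _)
            (show (θ' a - θ a) * θ' a⁻¹ ∈ F m from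
              magnus_mul_mem F hFanti hFmul _ _ hn
                (magnus_memF0 F hF0 _) (by omega)) (by omega) }
    have hle : (⊤ : Subgroup (FreeGroup (Fin n))).lowerCentralSeries (k + 1) ≤ T := by
      show ⁅(⊤ : Subgroup (FreeGroup (Fin n))).lowerCentralSeries k, (⊤ : Subgroup (FreeGroup (Fin n)))⁆ ≤ T
      rw [Subgroup.commutator_le]
      intro y hy z _
      show θ ⁅y, z⁆ - θ' ⁅y, z⁆ ∈ F m
      have hP := magnus_P F hF0 hFanti hFmul θ hθ1 k y hy
      have hP' := magnus_P F hF0 hFanti hFmul θ' hθ1' k y hy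
      have hQy := ih y hy
      have key : θ ⁅y, z⁆ - θ' ⁅y, z⁆ =
          (θ y * θ z - θ z * θ y) * ((θ y⁻¹ * θ z⁻¹) - (θ' y⁻¹ * θ' z⁻¹)) +
          ((θ y * θ z - θ z * θ y) - (θ' y * θ' z - θ' z * θ' y)) * (θ' y⁻¹ * θ' z⁻¹) := by
        have e1 := magnus_comm_eq θ y z
        have e2 := magnus_comm_eq θ' y z
        have : θ ⁅y, z⁆ - θ' ⁅y, z⁆ = (θ ⁅y, z⁆ - 1) - (θ' ⁅y, z⁆ - 1) := by abel
        rw [this, e1, e2]; noncomm_ring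
      rw [key]
      -- first summand
      have hab : θ y * θ z - θ z * θ y ∈ F (k + 2) := by
        have : θ y * θ z - θ z * θ y
            = (θ y - 1) * (θ z - 1) - (θ z - 1) * (θ y - 1) := by noncomm_ring
        rw [this]
        exact sub_mem
          (magnus_mul_mem F hFanti hFmul _ _ hP (hθ1 z) (by omega))
          (magnus_mul_mem F hFanti hFmul _ _ (hθ1 z) hP (by omega))
      have hd : (θ y⁻¹ * θ z⁻¹) - (θ' y⁻¹ * θ' z⁻¹) ∈ F 2 := by
        have : (θ y⁻¹ * θ z⁻¹) - (θ' y⁻¹ * θ' z⁻¹)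
            = θ (y⁻¹ * z⁻¹) - θ' (y⁻¹ * z⁻¹) := by rw [map_mul, map_mul]
        rw [this]; exact hQ0 _
      have h1 := magnus_mul_mem F hFanti hFmul _ _ hab hd (show m ≤ (k+2)+2 by omega)
      -- second summand
      have h2a : (θ y * θ z - θ z * θ y) - (θ' y * θ' z - θ' z * θ' y) ∈ F m := by
        have e : (θ y * θ z - θ z * θ y) - (θ' y * θ' z - θ' z * θ' y)
            = ((θ y - θ' y) * (θ z - 1) + (θ' y - 1) * (θ z - θ' z))
              - ((θ z - θ' z) * (θ y - 1) + (θ' z - 1) * (θ y - θ' y)) := by noncomm_ring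
        rw [e]
        exact sub_mem
          (add_mem
            (magnus_mul_mem F hFanti hFmul _ _ hQy (hθ1 z) (by omega))
            (magnus_mul_mem F hFanti hFmul _ _ hP' (hQ0 z) (by omega)))
          (add_mem
            (magnus_mul_mem F hFanti hFmul _ _ (hQ0 z) hP (by omega))
            (magnus_mul_mem F hFanti hFmul _ _ (hθ1' z) hQy (by omega)))
      have h2 := magnus_mul_mem F hFanti hFmul _ _ h2a
        (magnus_memF0 F hF0 (θ' y⁻¹ * θ' z⁻¹)) (show m ≤ m + 0 by omega)
      exact add_mem h1 h2
    exact fun y hy => hle hy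

end MagnusAux

/-- The leading (degree `k`) term of a Magnus expansion on `Γ_k F_n` is independent
of the choice of Magnus expansion: if `θ` and `θ'` are two Magnus expansions of the
free group `F_n` into the completed tensor algebra (modelled by a filtered algebra
`A` with multiplicative filtration `F` and degree-one embedding `ιH`), then for every
`y ∈ Γ_k F_n` the degree-`k` components of `θ(y)` and `θ'(y)` agree, i.e.
`θ(y) - θ'(y)` has degree `≥ k+1` (with Mathlib's indexing
`Γ_{k+1} F_n = lowerCentralSeries F_n k`, the conclusion reads
`θ y - θ' y ∈ F (k+2)`). -/
theorem magnus_leading_term_independent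
    (K A : Type*) [Field K] [CharZero K] [Ring A] [Algebra K A] (n : ℕ)
    (F : ℕ → Submodule K A)
    (hF0 : F 0 = ⊤)
    (hFanti : ∀ {m l : ℕ}, m ≤ l → F l ≤ F m)
    (hFmul : ∀ {m l : ℕ} (a b : A), a ∈ F m → b ∈ F l → a * b ∈ F (m + l))
    (ιH : (Fin n → K) →ₗ[K] A) (hιH : ∀ v, ιH v ∈ F 1)
    (cls : FreeGroup (Fin n) →* Multiplicative (Fin n → K))
    (hcls : ∀ i, cls (FreeGroup.of i) = Multiplicative.ofAdd (Pi.single i 1))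
    (θ θ' : FreeGroup (Fin n) →* A)
    (hθ : ∀ x : FreeGroup (Fin n), θ x - 1 - ιH (Multiplicative.toAdd (cls x)) ∈ F 2)
    (hθ' : ∀ x : FreeGroup (Fin n), θ' x - 1 - ιH (Multiplicative.toAdd (cls x)) ∈ F 2)
    (k : ℕ) (y : FreeGroup (Fin n)) (hy : y ∈ (⊤ : Subgroup (FreeGroup (Fin n))).lowerCentralSeries k) :
    θ y - θ' y ∈ F (k + 2) := by
  have hθ1 : ∀ x, θ x - 1 ∈ F 1 := fun x => by
    have := hθ x
    have h2 : θ x - 1 = (θ x - 1 - ιH (Multiplicative.toAdd (cls x)))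
        + ιH (Multiplicative.toAdd (cls x)) := by abel
    rw [h2]
    exact add_mem (hFanti (by omega) this) (hιH _)
  have hθ1' : ∀ x, θ' x - 1 ∈ F 1 := fun x => by
    have := hθ' x
    have h2 : θ' x - 1 = (θ' x - 1 - ιH (Multiplicative.toAdd (cls x)))
        + ιH (Multiplicative.toAdd (cls x)) := by abel
    rw [h2]
    exact add_mem (hFanti (by omega) this) (hιH _)
  have hQ0 : ∀ x, θ x - θ' x ∈ F 2 := fun x => by
    have h2 : θ x - θ' x = (θ x - 1 - ιH (Multiplicative.toAdd (cls x)))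
        - (θ' x - 1 - ιH (Multiplicative.toAdd (cls x))) := by abel
    rw [h2]
    exact sub_mem (hθ x) (hθ' x)
  exact magnus_Q F hF0 hFanti hFmul θ θ' hθ1 hθ1' hQ0 k y hy
end

section
/- The exponential map sends a special derivation ψ of the degree-completed free Lie algebra L (with ψ raising degree by at least 1) to a special automorphism exp(ψ) ∈ sAut(L), i.e. exp(ψ)(X_i) = U_i X_i U_i^{-1} for some group-like U_i ∈ exp(L) and exp(ψ)(X_1+...+X_n) = X_1+...+X_n. -/
open Finset

set_option linter.unusedSectionVars false
set_option linter.unnecessarySimpa false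

namespace ExpSpecialAux

variable {K A : Type*} [Field K] [CharZero K] [Ring A] [Algebra K A]
variable {F : ℕ → Submodule K A}

lemma memF0 (hF0 : F 0 = ⊤) (a : A) : a ∈ F 0 := by rw [hF0]; trivial

lemma sepF (hFsep : (⨅ m, F m) = ⊥) {x y : A} (h : ∀ m, x - y ∈ F m) : x = y := by
  have hx : x - y ∈ (⨅ m, F m) := Submodule.mem_iInf _ |>.mpr h
  rw [hFsep, Submodule.mem_bot] at hx
  exact sub_eq_zero.mp hx

lemma limF (hFcomplete : ∀ c : ℕ → A, (∀ m, c (m + 1) - c m ∈ F m) →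
      ∃ x : A, ∀ m, x - c m ∈ F m)
    (a : ℕ → A) (ha : ∀ N, a N ∈ F N) :
    ∃ S : A, ∀ m, S - ∑ N ∈ range m, a N ∈ F m := by
  refine hFcomplete (fun m => ∑ N ∈ range m, a N) ?_
  intro m
  simp only [Finset.sum_range_succ]
  simpa using ha m

lemma mulFF (hFmul : ∀ {m l : ℕ} (a b : A), a ∈ F m → b ∈ F l → a * b ∈ F (m + l))
    {m l : ℕ} {a b : A} (ha : a ∈ F m) (hb : b ∈ F l) : a * b ∈ F (m + l) :=
  hFmul a b ha hb

lemma mul_mem_left (hF0 : F 0 = ⊤)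
    (hFmul : ∀ {m l : ℕ} (a b : A), a ∈ F m → b ∈ F l → a * b ∈ F (m + l))
    {m : ℕ} (a : A) {b : A} (hb : b ∈ F m) : a * b ∈ F m := by
  have := hFmul a b (memF0 hF0 a) hb
  rwa [zero_add] at this

lemma mul_mem_right (hF0 : F 0 = ⊤)
    (hFmul : ∀ {m l : ℕ} (a b : A), a ∈ F m → b ∈ F l → a * b ∈ F (m + l))
    {m : ℕ} {a : A} (b : A) (ha : a ∈ F m) : a * b ∈ F m := by
  have := hFmul a b ha (memF0 hF0 b)
  rwa [add_zero] at this

lemma mul_congrF (hF0 : F 0 = ⊤)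
    (hFmul : ∀ {m l : ℕ} (a b : A), a ∈ F m → b ∈ F l → a * b ∈ F (m + l))
    {m : ℕ} {x x' y y' : A} (hx : x - x' ∈ F m) (hy : y - y' ∈ F m) :
    x * y - x' * y' ∈ F m := by
  have : x * y - x' * y' = (x - x') * y + x' * (y - y') := by noncomm_ring
  rw [this]
  exact Submodule.add_mem _ (mul_mem_right hF0 hFmul _ hx) (mul_mem_left hF0 hFmul _ hy)

lemma pow_memF (hF0 : F 0 = ⊤)
    (hFmul : ∀ {m l : ℕ} (a b : A), a ∈ F m → b ∈ F l → a * b ∈ F (m + l))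
    {a : A} (ha : a ∈ F 1) : ∀ j : ℕ, a ^ j ∈ F j
  | 0 => by simpa using memF0 hF0 1
  | (j+1) => by
      rw [pow_succ]
      exact hFmul _ _ (pow_memF hF0 hFmul ha j) ha

lemma pow_congrF (hF0 : F 0 = ⊤)
    (hFmul : ∀ {m l : ℕ} (a b : A), a ∈ F m → b ∈ F l → a * b ∈ F (m + l))
    {m : ℕ} {x y : A} (h : x - y ∈ F m) : ∀ j : ℕ, x ^ j - y ^ j ∈ F m
  | 0 => by simpa using Submodule.zero_mem _
  | (j+1) => by
      rw [pow_succ, pow_succ]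
      exact mul_congrF hF0 hFmul (pow_congrF hF0 hFmul h j) h


section Deriv
variable {d : A →ₗ[K] A}

lemma dpow_apply_succ (d : A →ₗ[K] A) (j : ℕ) (a : A) :
    (d ^ (j + 1)) a = (d ^ j) (d a) := by
  rw [pow_succ, Module.End.mul_apply]

lemma dpow_memF (hdeg : ∀ m : ℕ, ∀ a ∈ F m, d a ∈ F (m + 1)) :
    ∀ (j : ℕ) {k : ℕ} {a : A}, a ∈ F k → (d ^ j) a ∈ F (k + j)
  | 0, k, a, ha => by simpa using ha
  | (j+1), k, a, ha => by
      have h2 := dpow_memF hdeg j (hdeg _ _ ha)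
      rw [dpow_apply_succ]
      have : k + 1 + j = k + (j + 1) := by omega
      rwa [this] at h2

lemma dpow_memF0 (hF0 : F 0 = ⊤) (hdeg : ∀ m : ℕ, ∀ a ∈ F m, d a ∈ F (m + 1))
    (j : ℕ) (a : A) : (d ^ j) a ∈ F j := by
  simpa using dpow_memF hdeg j (memF0 hF0 a)

lemma dpow_leibniz (hleib : ∀ a b : A, d (a * b) = d a * b + a * d b) (a b : A) :
    ∀ n : ℕ, (d ^ n) (a * b)
      = ∑ p ∈ Finset.HasAntidiagonal.antidiagonal n, (n.choose p.1) • ((d ^ p.1) a * (d ^ p.2) b)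
  | 0 => by simp
  | (n+1) => by
      have e1 : (d ^ (n+1)) (a * b) =
          (∑ p ∈ Finset.HasAntidiagonal.antidiagonal n, (n.choose p.1) • ((d ^ (p.1+1)) a * (d ^ p.2) b))
          + ∑ p ∈ Finset.HasAntidiagonal.antidiagonal n, (n.choose p.1) • ((d ^ p.1) a * (d ^ (p.2+1)) b) := by
        rw [dpow_apply_succ, hleib, map_add, dpow_leibniz hleib (d a) b n,
          dpow_leibniz hleib a (d b) n]
        simp_rw [dpow_apply_succ]
      have hT1 : (∑ p ∈ Finset.HasAntidiagonal.antidiagonal (n+1), (n.choose p.1) • ((d ^ p.1) a * (d ^ p.2) b))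
          = a * (d ^ (n+1)) b + ∑ p ∈ Finset.HasAntidiagonal.antidiagonal n,
              (n.choose (p.1+1)) • ((d ^ (p.1+1)) a * (d ^ p.2) b) := by
        rw [Finset.Nat.sum_antidiagonal_succ]; simp
      have hT2 : (∑ p ∈ Finset.HasAntidiagonal.antidiagonal (n+1), (n.choose p.1) • ((d ^ p.1) a * (d ^ p.2) b))
          = ∑ p ∈ Finset.HasAntidiagonal.antidiagonal n, (n.choose p.1) • ((d ^ p.1) a * (d ^ (p.2+1)) b) := by
        rw [Finset.Nat.sum_antidiagonal_succ']; simp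
      rw [e1, ← hT2, hT1]
      rw [Finset.Nat.sum_antidiagonal_succ
        (f := fun p => ((n+1).choose p.1) • ((d ^ p.1) a * (d ^ p.2) b))]
      simp only [Nat.choose_zero_right, one_smul, pow_zero, Module.End.one_apply,
        Nat.choose_succ_succ, add_smul]
      rw [Finset.sum_add_distrib]
      abel

end Deriv

section Combi
variable {M : Type*} [AddCommMonoid M]

lemma sum_range_antidiagonal (f : ℕ → ℕ → M) :
    ∀ m : ℕ, (∑ N ∈ range m, ∑ p ∈ Finset.HasAntidiagonal.antidiagonal N, f p.1 p.2)
      = ∑ i ∈ range m, ∑ j ∈ range (m - i), f i j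
  | 0 => by simp
  | (m+1) => by
      have h1 : ∀ i ∈ range m, (∑ j ∈ range (m + 1 - i), f i j)
          = (∑ j ∈ range (m - i), f i j) + f i (m - i) := by
        intro i hi
        rw [Finset.mem_range] at hi
        have e : m + 1 - i = (m - i) + 1 := by omega
        rw [e, Finset.sum_range_succ]
      have e2 : m + 1 - m = 1 := by omega
      have e3 : m - m = 0 := by omega
      rw [Finset.sum_range_succ, sum_range_antidiagonal f m,
        Finset.Nat.sum_antidiagonal_eq_sum_range_succ_mk,
        Finset.sum_range_succ (fun i => ∑ j ∈ range (m + 1 - i), f i j) m,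
        Finset.sum_congr rfl h1, Finset.sum_add_distrib,
        Finset.sum_range_succ (fun i => f i (m - i)) m, e2, e3,
        Finset.sum_range_one]
      abel

lemma triple_antidiagonal (f : ℕ → ℕ → ℕ → M) (N : ℕ) :
    (∑ jm ∈ Finset.HasAntidiagonal.antidiagonal N, ∑ kl ∈ Finset.HasAntidiagonal.antidiagonal jm.1, f kl.1 kl.2 jm.2)
      = ∑ kr ∈ Finset.HasAntidiagonal.antidiagonal N, ∑ lm ∈ Finset.HasAntidiagonal.antidiagonal kr.2, f kr.1 lm.1 lm.2 := by
  rw [Finset.sum_sigma' (Finset.HasAntidiagonal.antidiagonal N) (fun jm => Finset.HasAntidiagonal.antidiagonal jm.1)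
        (fun jm kl => f kl.1 kl.2 jm.2),
      Finset.sum_sigma' (Finset.HasAntidiagonal.antidiagonal N) (fun kr => Finset.HasAntidiagonal.antidiagonal kr.2)
        (fun kr lm => f kr.1 lm.1 lm.2)]
  refine Finset.sum_nbij' (fun x => ⟨(x.2.1, x.2.2 + x.1.2), (x.2.2, x.1.2)⟩)
      (fun y => ⟨(y.1.1 + y.2.1, y.2.2), (y.1.1, y.2.1)⟩) ?_ ?_ ?_ ?_ ?_
  · rintro ⟨⟨a, b⟩, ⟨c, e⟩⟩ h
    simp only [Finset.mem_sigma, Finset.HasAntidiagonal.mem_antidiagonal] at h ⊢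
    exact ⟨by omega, trivial⟩
  · rintro ⟨⟨a, b⟩, ⟨c, e⟩⟩ h
    simp only [Finset.mem_sigma, Finset.HasAntidiagonal.mem_antidiagonal] at h ⊢
    exact ⟨by omega, trivial⟩
  · rintro ⟨⟨a, b⟩, ⟨c, e⟩⟩ h
    simp only [Finset.mem_sigma, Finset.HasAntidiagonal.mem_antidiagonal] at h
    obtain ⟨h1, h2⟩ := h
    subst h2
    rfl
  · rintro ⟨⟨a, b⟩, ⟨c, e⟩⟩ h
    simp only [Finset.mem_sigma, Finset.HasAntidiagonal.mem_antidiagonal] at h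
    obtain ⟨h1, h2⟩ := h
    subst h2
    rfl
  · rintro ⟨⟨a, b⟩, ⟨c, e⟩⟩ h
    rfl

end Combi

lemma cauchyF (hF0 : F 0 = ⊤)
    (hFanti : ∀ {m l : ℕ}, m ≤ l → F l ≤ F m)
    (hFmul : ∀ {m l : ℕ} (a b : A), a ∈ F m → b ∈ F l → a * b ∈ F (m + l))
    {SA SB : A} {p q : ℕ → A}
    (hp : ∀ N, p N ∈ F N) (hq : ∀ N, q N ∈ F N)
    (hSA : ∀ m, SA - ∑ N ∈ range m, p N ∈ F m)
    (hSB : ∀ m, SB - ∑ N ∈ range m, q N ∈ F m) (m : ℕ) :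
    SA * SB - ∑ N ∈ range m, ∑ ij ∈ Finset.HasAntidiagonal.antidiagonal N, p ij.1 * q ij.2 ∈ F m := by
  have h1 : SA * SB - (∑ N ∈ range m, p N) * (∑ N ∈ range m, q N) ∈ F m :=
    mul_congrF hF0 hFmul (hSA m) (hSB m)
  have h2 : (∑ N ∈ range m, p N) * (∑ N ∈ range m, q N)
      - (∑ N ∈ range m, ∑ ij ∈ Finset.HasAntidiagonal.antidiagonal N, p ij.1 * q ij.2) ∈ F m := by
    rw [Finset.sum_mul_sum, sum_range_antidiagonal (fun i j => p i * q j), ← Finset.sum_sub_distrib]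
    refine Submodule.sum_mem _ ?_
    intro i hi
    have h3 : (∑ j ∈ range m, p i * q j) - (∑ j ∈ range (m - i), p i * q j)
        = ∑ j ∈ Finset.Ico (m - i) m, p i * q j := by
      rw [eq_comm, eq_sub_iff_add_eq, add_comm,
        Finset.sum_range_add_sum_Ico _ (Nat.sub_le m i)]
    rw [h3]
    refine Submodule.sum_mem _ ?_
    intro j hj
    rw [Finset.mem_range] at hi
    rw [Finset.mem_Ico] at hj
    exact hFanti (by omega : m ≤ i + j) (hFmul _ _ (hp i) (hq j))
  have := Submodule.add_mem _ h1 h2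
  rwa [sub_add_sub_cancel] at this

section Exp

variable (F) in
noncomputable def expF
    (hF0 : F 0 = ⊤)
    (hFmul : ∀ {m l : ℕ} (a b : A), a ∈ F m → b ∈ F l → a * b ∈ F (m + l))
    (hFcomplete : ∀ c : ℕ → A, (∀ m, c (m + 1) - c m ∈ F m) →
      ∃ x : A, ∀ m, x - c m ∈ F m) (W : A) : A :=
  @dite _ (W ∈ F 1) (Classical.dec _)
    (fun h => Classical.choose (limF hFcomplete (fun j => (j.factorial : K)⁻¹ • W ^ j)
      (fun j => Submodule.smul_mem _ _ (pow_memF hF0 hFmul h j))))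
    (fun _ => 0)

variable (hF0 : F 0 = ⊤)
    (hFanti : ∀ {m l : ℕ}, m ≤ l → F l ≤ F m)
    (hFmul : ∀ {m l : ℕ} (a b : A), a ∈ F m → b ∈ F l → a * b ∈ F (m + l))
    (hFsep : (⨅ m, F m) = ⊥)
    (hFcomplete : ∀ c : ℕ → A, (∀ m, c (m + 1) - c m ∈ F m) →
      ∃ x : A, ∀ m, x - c m ∈ F m)

include hF0 hFmul hFcomplete in
lemma expF_spec {W : A} (hW : W ∈ F 1) (m : ℕ) :
    expF F hF0 hFmul hFcomplete W - ∑ j ∈ range m, (j.factorial : K)⁻¹ • W ^ j ∈ F m := by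
  rw [expF, dif_pos hW]
  exact Classical.choose_spec (limF hFcomplete (fun j => (j.factorial : K)⁻¹ • W ^ j)
    (fun j => Submodule.smul_mem _ _ (pow_memF hF0 hFmul hW j))) m

include hF0 hFmul hFcomplete in
lemma expF_congr {W W' : A} (hW : W ∈ F 1) (hW' : W' ∈ F 1) {m : ℕ}
    (h : W - W' ∈ F m) :
    expF F hF0 hFmul hFcomplete W - expF F hF0 hFmul hFcomplete W' ∈ F m := by
  have h1 := expF_spec hF0 hFmul hFcomplete hW m
  have h2 := expF_spec hF0 hFmul hFcomplete hW' m
  have h3 : (∑ j ∈ range m, (j.factorial : K)⁻¹ • W ^ j)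
      - (∑ j ∈ range m, (j.factorial : K)⁻¹ • W' ^ j) ∈ F m := by
    rw [← Finset.sum_sub_distrib]
    refine Submodule.sum_mem _ fun j _ => ?_
    rw [← smul_sub]
    exact Submodule.smul_mem _ _ (pow_congrF hF0 hFmul h j)
  have e : expF F hF0 hFmul hFcomplete W - expF F hF0 hFmul hFcomplete W'
      = (expF F hF0 hFmul hFcomplete W - ∑ j ∈ range m, (j.factorial : K)⁻¹ • W ^ j)
        - (expF F hF0 hFmul hFcomplete W' - ∑ j ∈ range m, (j.factorial : K)⁻¹ • W' ^ j)
        + ((∑ j ∈ range m, (j.factorial : K)⁻¹ • W ^ j)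
          - ∑ j ∈ range m, (j.factorial : K)⁻¹ • W' ^ j) := by abel
  rw [e]
  exact Submodule.add_mem _ (Submodule.sub_mem _ h1 h2) h3

include hF0 hFmul hFsep hFcomplete in
lemma expF_zero : expF F hF0 hFmul hFcomplete (0 : A) = 1 := by
  refine sepF hFsep fun m => ?_
  match m with
  | 0 => exact memF0 hF0 _
  | (m+1) =>
    have h := expF_spec hF0 hFmul hFcomplete (Submodule.zero_mem (F 1)) (m+1)
    have e : (∑ j ∈ range (m+1), (j.factorial : K)⁻¹ • (0 : A) ^ j) = 1 := by
      rw [Finset.sum_range_succ']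
      simp
    rwa [e] at h

include hF0 hFanti hFmul hFcomplete in
lemma expF_perturb {W D : A} (hW : W ∈ F 1) {m : ℕ} (hm : 1 ≤ m) (hD : D ∈ F m) :
    expF F hF0 hFmul hFcomplete (W + D) - expF F hF0 hFmul hFcomplete W - D ∈ F (m+1) := by
  have hD1 : D ∈ F 1 := hFanti hm hD
  have hWD : W + D ∈ F 1 := Submodule.add_mem _ hW hD1
  have hg : ∀ j : ℕ, (W + D) ^ (j+1) - W ^ (j+1) ∈ F (m + j) := by
    intro j
    induction j with
    | zero => simpa using hD
    | succ j ih =>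
      have e : (W + D) ^ (j+2) - W ^ (j+2)
          = ((W + D) ^ (j+1) - W ^ (j+1)) * (W + D) + W ^ (j+1) * D := by
        rw [pow_succ, pow_succ]
        noncomm_ring
      rw [e]
      refine Submodule.add_mem _ ?_ ?_
      · have := hFmul _ _ ih hWD
        rwa [show m + j + 1 = m + (j+1) by omega] at this
      · have := hFmul _ _ (pow_memF hF0 hFmul hW (j+1)) hD
        have e2 : j + 1 + m = m + (j + 1) := by omega
        rwa [e2] at this
  obtain ⟨k, rfl⟩ : ∃ k, m = k + 1 := ⟨m - 1, by omega⟩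
  have h1 := expF_spec hF0 hFmul hFcomplete hWD (k+2)
  have h2 := expF_spec hF0 hFmul hFcomplete hW (k+2)
  have h3 : (∑ j ∈ range (k+2), (j.factorial : K)⁻¹ • (W + D) ^ j)
      - (∑ j ∈ range (k+2), (j.factorial : K)⁻¹ • W ^ j) - D ∈ F (k+2) := by
    have e : (∑ j ∈ range (k+2), (j.factorial : K)⁻¹ • (W + D) ^ j)
        - (∑ j ∈ range (k+2), (j.factorial : K)⁻¹ • W ^ j)
        = ∑ j ∈ range (k+2), (j.factorial : K)⁻¹ • ((W + D) ^ j - W ^ j) := by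
      rw [← Finset.sum_sub_distrib]
      exact Finset.sum_congr rfl fun j _ => (smul_sub _ _ _).symm
    rw [e, Finset.sum_range_succ', Finset.sum_range_succ']
    simp only [pow_zero, sub_self, smul_zero, add_zero, zero_add, pow_one,
      Nat.factorial_one, Nat.cast_one, inv_one, one_smul, add_sub_cancel_left]
    rw [add_sub_cancel_right]
    refine Submodule.sum_mem _ fun j _ => Submodule.smul_mem _ _ ?_
    exact hFanti (by omega) (hg (j+1))
  have e : expF F hF0 hFmul hFcomplete (W + D) - expF F hF0 hFmul hFcomplete W - D
      = (expF F hF0 hFmul hFcomplete (W + D) - ∑ j ∈ range (k+2), (j.factorial : K)⁻¹ • (W + D) ^ j)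
        - (expF F hF0 hFmul hFcomplete W - ∑ j ∈ range (k+2), (j.factorial : K)⁻¹ • W ^ j)
        + ((∑ j ∈ range (k+2), (j.factorial : K)⁻¹ • (W + D) ^ j)
          - (∑ j ∈ range (k+2), (j.factorial : K)⁻¹ • W ^ j) - D) := by abel
  rw [e]
  exact Submodule.add_mem _ (Submodule.sub_mem _ h1 h2) h3

include hF0 hFanti hFmul hFsep hFcomplete in
lemma exp_surjF {U : A} (hU : U - 1 ∈ F 1) :
    ∃ W ∈ F 1, ∀ m : ℕ, U - ∑ j ∈ range m, (j.factorial : K)⁻¹ • W ^ j ∈ F m := by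
  classical
  set e : A → A := expF F hF0 hFmul hFcomplete with he
  let f : ℕ → A := fun m => Nat.rec (0 : A) (fun _ w => w + (U - e w)) m
  have hf0 : f 0 = 0 := rfl
  have hfs : ∀ m, f (m+1) = f m + (U - e (f m)) := fun m => rfl
  have hinv : ∀ m, f m ∈ F 1 ∧ U - e (f m) ∈ F (m+1) := by
    intro m
    induction m with
    | zero =>
      refine ⟨by rw [hf0]; exact Submodule.zero_mem _, ?_⟩
      rw [hf0, he, expF_zero hF0 hFmul hFsep hFcomplete]
      exact hU
    | succ m ih =>
      obtain ⟨hfm, hDm⟩ := ih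
      have hf1 : f (m+1) ∈ F 1 := by
        rw [hfs]
        exact Submodule.add_mem _ hfm (hFanti (by omega) hDm)
      refine ⟨hf1, ?_⟩
      have hp := expF_perturb hF0 hFanti hFmul hFcomplete hfm
        (show 1 ≤ m + 1 by omega) hDm
      have e2 : U - e (f (m+1))
          = -(e (f m + (U - e (f m))) - e (f m) - (U - e (f m))) := by
        rw [hfs]; abel
      rw [e2]
      exact Submodule.neg_mem _ hp
  obtain ⟨W, hWc⟩ := hFcomplete (fun m => f (m+1)) (by
    intro m
    show f (m + 1 + 1) - f (m + 1) ∈ F m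
    rw [hfs (m+1)]
    have := (hinv (m+1)).2
    simpa using hFanti (by omega : m ≤ m + 2) this)
  have hW1 : W ∈ F 1 := by
    have h1 := hWc 1
    have : W = (W - f 2) + f 2 := by abel
    rw [this]
    exact Submodule.add_mem _ h1 (hinv 2).1
  refine ⟨W, hW1, fun m => ?_⟩
  have h1 : U - e (f (m+1)) ∈ F m := hFanti (by omega) (hinv (m+1)).2
  have h2 : e (f (m+1)) - e W ∈ F m := by
    refine expF_congr hF0 hFmul hFcomplete (hinv (m+1)).1 hW1 ?_
    have := Submodule.neg_mem _ (hWc m)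
    simpa using this
  have h3 : e W - ∑ j ∈ range m, (j.factorial : K)⁻¹ • W ^ j ∈ F m :=
    expF_spec hF0 hFmul hFcomplete hW1 m
  have e4 : U - ∑ j ∈ range m, (j.factorial : K)⁻¹ • W ^ j
      = (U - e (f (m+1))) + (e (f (m+1)) - e W)
        + (e W - ∑ j ∈ range m, (j.factorial : K)⁻¹ • W ^ j) := by abel
  rw [e4]
  exact Submodule.add_mem _ (Submodule.add_mem _ h1 h2) h3

include hF0 hFmul hFsep hFcomplete in
lemma unitF {U : A} (hU : U - 1 ∈ F 1) :
    ∃ V : A, U * V = 1 ∧ V * U = 1 := by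
  set Z : A := 1 - U with hZ
  have hZ1 : Z ∈ F 1 := by
    have := Submodule.neg_mem _ hU
    simpa [hZ] using this
  obtain ⟨T, hT⟩ := limF hFcomplete (fun k => Z ^ k) (fun k => pow_memF hF0 hFmul hZ1 k)
  have geo1 : ∀ m : ℕ, (1 - Z) * ∑ k ∈ range m, Z ^ k = 1 - Z ^ m := by
    intro m
    induction m with
    | zero => simp
    | succ m ih =>
      rw [Finset.sum_range_succ, mul_add, ih, pow_succ']
      noncomm_ring
  have geo2 : ∀ m : ℕ, (∑ k ∈ range m, Z ^ k) * (1 - Z) = 1 - Z ^ m := by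
    intro m
    induction m with
    | zero => simp
    | succ m ih =>
      rw [Finset.sum_range_succ, add_mul, ih, pow_succ]
      noncomm_ring
  have hUZ : U = 1 - Z := by rw [hZ]; abel
  refine ⟨T, ?_, ?_⟩
  · refine sepF hFsep fun m => ?_
    have h1 : U * (T - ∑ k ∈ range m, Z ^ k) ∈ F m := mul_mem_left hF0 hFmul U (hT m)
    have h2 : Z ^ m ∈ F m := pow_memF hF0 hFmul hZ1 m
    have e : U * T - 1 = U * (T - ∑ k ∈ range m, Z ^ k) - Z ^ m := by
      rw [mul_sub, hUZ, geo1 m]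
      abel
    rw [e]
    exact Submodule.sub_mem _ h1 h2
  · refine sepF hFsep fun m => ?_
    have h1 : (T - ∑ k ∈ range m, Z ^ k) * U ∈ F m := mul_mem_right hF0 hFmul U (hT m)
    have h2 : Z ^ m ∈ F m := pow_memF hF0 hFmul hZ1 m
    have e : T * U - 1 = (T - ∑ k ∈ range m, Z ^ k) * U - Z ^ m := by
      rw [sub_mul, hUZ, geo2 m]
      abel
    rw [e]
    exact Submodule.sub_mem _ h1 h2

end Exp

section Gamma

noncomputable def gam (K : Type*) [Field K] (l m : ℕ) : K :=
  ((l.factorial : K) * (m.factorial : K))⁻¹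

noncomputable def gam3 (K : Type*) [Field K] (k l m : ℕ) : K :=
  ((k.factorial : K) * ((l.factorial : K) * (m.factorial : K)))⁻¹

variable (K)

lemma factK_ne (n : ℕ) : (n.factorial : K) ≠ 0 :=
  Nat.cast_ne_zero.mpr n.factorial_ne_zero

lemma gam_zero : gam K 0 0 = 1 := by simp [gam]

lemma gam_succ_left (j m : ℕ) : ((j + 1 : ℕ) : K) * gam K (j+1) m = gam K j m := by
  have h1 : (j : K) + 1 ≠ 0 := Nat.cast_add_one_ne_zero j
  have h2 := factK_ne K j
  have h3 := factK_ne K m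
  rw [gam, gam, Nat.factorial_succ]
  push_cast
  field_simp

lemma gam_succ_right (j m : ℕ) : ((m + 1 : ℕ) : K) * gam K j (m+1) = gam K j m := by
  have h1 : (m : K) + 1 ≠ 0 := Nat.cast_add_one_ne_zero m
  have h2 := factK_ne K j
  have h3 := factK_ne K m
  rw [gam, gam, Nat.factorial_succ]
  push_cast
  field_simp

lemma gam3_left (k l m : ℕ) : (k.factorial : K)⁻¹ * gam K l m = gam3 K k l m := by
  rw [gam, gam3]
  simp [mul_inv]
  ring

lemma gam_choose (k l m : ℕ) :
    gam K (k + l) m * (((k + l).choose k : ℕ) : K) = gam3 K k l m := by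
  rw [gam, gam3, Nat.cast_choose K (Nat.le_add_right k l), Nat.add_sub_cancel_left]
  have h1 := factK_ne K (k + l)
  have h2 := factK_ne K k
  have h3 := factK_ne K l
  have h4 := factK_ne K m
  field_simp

end Gamma

section Cseq
variable (d : A →ₗ[K] A)

def wseq (Y x0 : A) : ℕ → A
  | 0 => x0
  | (m+1) => Y * wseq Y x0 m - d (wseq Y x0 m)

noncomputable def cseq (w : ℕ → A) (N : ℕ) : A :=
  ∑ jm ∈ Finset.HasAntidiagonal.antidiagonal N, gam K jm.1 jm.2 • (d ^ jm.1) (w jm.2)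

lemma wseq_succ (Y x0 : A) (m : ℕ) :
    wseq d Y x0 (m+1) = Y * wseq d Y x0 m - d (wseq d Y x0 m) := rfl

lemma wseq_memF (hF0 : F 0 = ⊤)
    (hFmul : ∀ {m l : ℕ} (a b : A), a ∈ F m → b ∈ F l → a * b ∈ F (m + l))
    (hdeg : ∀ m : ℕ, ∀ a ∈ F m, d a ∈ F (m + 1))
    {Y : A} (hY : Y ∈ F 1) (x0 : A) : ∀ m, wseq d Y x0 m ∈ F m
  | 0 => memF0 hF0 _
  | (m+1) => by
      rw [wseq_succ]
      refine Submodule.sub_mem _ ?_ (hdeg m _ (wseq_memF hF0 hFmul hdeg hY x0 m))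
      have := hFmul _ _ hY (wseq_memF hF0 hFmul hdeg hY x0 m)
      rwa [show 1 + m = m + 1 by omega] at this

lemma wseq_mul (hleib : ∀ a b : A, d (a * b) = d a * b + a * d b)
    {x y : A} (hdx : d x = y * x - x * y) :
    ∀ m, x * wseq d y 1 m = wseq d y x m
  | 0 => mul_one x
  | (m+1) => by
      rw [wseq_succ, wseq_succ, ← wseq_mul hleib hdx m, hleib, hdx]
      noncomm_ring

lemma cseq_memF (hdeg : ∀ m : ℕ, ∀ a ∈ F m, d a ∈ F (m + 1))
    {w : ℕ → A} (hw : ∀ m, w m ∈ F m) (N : ℕ) : cseq d w N ∈ F N := by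
  refine Submodule.sum_mem _ fun jm hjm => Submodule.smul_mem _ _ ?_
  rw [Finset.HasAntidiagonal.mem_antidiagonal] at hjm
  have := dpow_memF hdeg jm.1 (hw jm.2)
  rwa [show jm.2 + jm.1 = N by omega] at this

lemma cseq_zero (w : ℕ → A) : cseq d w 0 = w 0 := by
  simp [cseq, gam]

lemma key_expand (hleib : ∀ a b : A, d (a * b) = d a * b + a * d b)
    (w : ℕ → A) (Z : A) (N : ℕ) :
    (∑ jm ∈ Finset.HasAntidiagonal.antidiagonal N, gam K jm.1 jm.2 • (d ^ jm.1) (Z * w jm.2))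
      = ∑ kr ∈ Finset.HasAntidiagonal.antidiagonal N,
          (kr.1.factorial : K)⁻¹ • ((d ^ kr.1) Z * cseq d w kr.2) := by
  have step1 : (∑ jm ∈ Finset.HasAntidiagonal.antidiagonal N, gam K jm.1 jm.2 • (d ^ jm.1) (Z * w jm.2))
      = ∑ jm ∈ Finset.HasAntidiagonal.antidiagonal N, ∑ kl ∈ Finset.HasAntidiagonal.antidiagonal jm.1,
          gam3 K kl.1 kl.2 jm.2 • ((d ^ kl.1) Z * (d ^ kl.2) (w jm.2)) := by
    refine Finset.sum_congr rfl fun jm _ => ?_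
    obtain ⟨j, m2⟩ := jm
    rw [dpow_leibniz hleib, Finset.smul_sum]
    refine Finset.sum_congr rfl fun kl hkl => ?_
    obtain ⟨k, l⟩ := kl
    rw [Finset.HasAntidiagonal.mem_antidiagonal] at hkl
    subst hkl
    rw [← Nat.cast_smul_eq_nsmul K, smul_smul, gam_choose]
  rw [step1, triple_antidiagonal
    (fun k l m => gam3 K k l m • ((d ^ k) Z * (d ^ l) (w m))) N]
  refine Finset.sum_congr rfl fun kr _ => ?_
  rw [cseq, Finset.mul_sum, Finset.smul_sum]
  refine Finset.sum_congr rfl fun lm _ => ?_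
  rw [mul_smul_comm, smul_smul, gam3_left]

lemma cseq_rec (hleib : ∀ a b : A, d (a * b) = d a * b + a * d b)
    {Y : A} {w : ℕ → A} (hwrec : ∀ m, w (m+1) = Y * w m - d (w m)) (N : ℕ) :
    ((N + 1 : ℕ) : K) • cseq d w (N+1)
      = ∑ kr ∈ Finset.HasAntidiagonal.antidiagonal N,
          (kr.1.factorial : K)⁻¹ • ((d ^ kr.1) Y * cseq d w kr.2) := by
  rw [cseq, Finset.smul_sum]
  have e1 : ∀ jm ∈ Finset.HasAntidiagonal.antidiagonal (N+1),
      ((N + 1 : ℕ) : K) • (gam K jm.1 jm.2 • (d ^ jm.1) (w jm.2))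
        = ((jm.1 : K) * gam K jm.1 jm.2) • (d ^ jm.1) (w jm.2)
          + ((jm.2 : K) * gam K jm.1 jm.2) • (d ^ jm.1) (w jm.2) := by
    intro jm h
    rw [Finset.HasAntidiagonal.mem_antidiagonal] at h
    rw [smul_smul, ← add_smul, ← add_mul, ← Nat.cast_add, h]
  rw [Finset.sum_congr rfl e1, Finset.sum_add_distrib,
    Finset.Nat.sum_antidiagonal_succ
      (f := fun p => ((p.1 : K) * gam K p.1 p.2) • (d ^ p.1) (w p.2)),
    Finset.Nat.sum_antidiagonal_succ'
      (f := fun p => ((p.2 : K) * gam K p.1 p.2) • (d ^ p.1) (w p.2))]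
  simp only [Nat.cast_zero, zero_mul, zero_smul, zero_add]
  rw [← Finset.sum_add_distrib]
  have e2 : ∀ p ∈ Finset.HasAntidiagonal.antidiagonal N,
      (((p.1 + 1 : ℕ) : K) * gam K (p.1 + 1) p.2) • (d ^ (p.1 + 1)) (w p.2)
        + (((p.2 + 1 : ℕ) : K) * gam K p.1 (p.2 + 1)) • (d ^ p.1) (w (p.2 + 1))
      = gam K p.1 p.2 • (d ^ p.1) (Y * w p.2) := by
    intro p _
    rw [gam_succ_left, gam_succ_right, dpow_apply_succ, ← smul_add, ← map_add,
      hwrec p.2, add_comm, sub_add_cancel]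
  rw [Finset.sum_congr rfl e2]
  exact key_expand d hleib w Y N

end Cseq

lemma conjF
    (hF0 : F 0 = ⊤)
    (hFanti : ∀ {m l : ℕ}, m ≤ l → F l ≤ F m)
    (hFmul : ∀ {m l : ℕ} (a b : A), a ∈ F m → b ∈ F l → a * b ∈ F (m + l))
    (hFsep : (⨅ m, F m) = ⊥)
    (hFcomplete : ∀ c : ℕ → A, (∀ m, c (m + 1) - c m ∈ F m) →
      ∃ x : A, ∀ m, x - c m ∈ F m)
    (d : A →ₗ[K] A)
    (hleib : ∀ a b : A, d (a * b) = d a * b + a * d b)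
    (hdeg : ∀ m : ℕ, ∀ a ∈ F m, d a ∈ F (m + 1))
    {x y : A} (hx : x ∈ F 1) (hy : y ∈ F 1) (hdx : d x = y * x - x * y)
    (E : A →ₗ[K] A)
    (hE : ∀ (a : A) (m : ℕ),
      E a - ∑ j ∈ range m, ((j.factorial : K)⁻¹) • ((d ^ j) a) ∈ F m) :
    ∃ (U : Aˣ) (W : A), W ∈ F 1 ∧
      (∀ m : ℕ, (U : A) - ∑ j ∈ range m, ((j.factorial : K)⁻¹) • W ^ j ∈ F m) ∧
      E x = (U : A) * x * ((U⁻¹ : Aˣ) : A) := by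
  have hvmem : ∀ m, wseq d y 1 m ∈ F m := wseq_memF d hF0 hFmul hdeg hy 1
  have humem : ∀ N, cseq d (wseq d y 1) N ∈ F N := cseq_memF d hdeg hvmem
  obtain ⟨U, hU⟩ := limF hFcomplete _ humem
  have hrec1 := fun N => cseq_rec d hleib (Y := y) (w := wseq d y 1) (wseq_succ d y 1) N
  have hrec2 := fun N => cseq_rec d hleib (Y := y) (w := wseq d y x) (wseq_succ d y x) N
  have hab : ∀ N, cseq d (wseq d y 1) N * x = cseq d (wseq d y x) N := by
    intro N
    induction N using Nat.strong_induction_on with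
    | _ N ih =>
      rcases N with _ | N
      · rw [cseq_zero, cseq_zero]
        exact one_mul x
      · have hne : ((N + 1 : ℕ) : K) ≠ 0 := Nat.cast_ne_zero.mpr (Nat.succ_ne_zero N)
        have hsm : ((N + 1 : ℕ) : K) • (cseq d (wseq d y 1) (N+1) * x)
            = ((N + 1 : ℕ) : K) • cseq d (wseq d y x) (N+1) := by
          rw [hrec2 N, ← smul_mul_assoc, hrec1 N, Finset.sum_mul]
          refine Finset.sum_congr rfl fun kr hkr => ?_
          rw [Finset.HasAntidiagonal.mem_antidiagonal] at hkr
          rw [smul_mul_assoc, mul_assoc, ih kr.2 (by omega)]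
        have hne' : ((N : K) + 1) ≠ 0 := Nat.cast_add_one_ne_zero N
        have := congrArg (fun z => ((N + 1 : ℕ) : K)⁻¹ • z) hsm
        simpa [smul_smul, inv_mul_cancel₀ hne'] using this
  have hu0 : cseq d (wseq d y 1) 0 = 1 := cseq_zero d _
  have hU1 : U - 1 ∈ F 1 := by
    have h := hU 1
    rwa [Finset.sum_range_one, hu0] at h
  have hp : ∀ N : ℕ, (N.factorial : K)⁻¹ • (d ^ N) x ∈ F N := fun N =>
    Submodule.smul_mem _ _ (dpow_memF0 hF0 hdeg N x)
  have hcauchy := cauchyF hF0 hFanti hFmul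
    (p := fun N => (N.factorial : K)⁻¹ • (d ^ N) x)
    (q := fun N => cseq d (wseq d y 1) N) hp humem (hE x) hU
  have hqb : ∀ N : ℕ, (∑ ij ∈ Finset.HasAntidiagonal.antidiagonal N,
        ((ij.1.factorial : K)⁻¹ • (d ^ ij.1) x) * cseq d (wseq d y 1) ij.2)
      = cseq d (wseq d y x) N := by
    intro N
    have h1 : ∀ ij ∈ Finset.HasAntidiagonal.antidiagonal N,
        ((ij.1.factorial : K)⁻¹ • (d ^ ij.1) x) * cseq d (wseq d y 1) ij.2
          = (ij.1.factorial : K)⁻¹ • ((d ^ ij.1) x * cseq d (wseq d y 1) ij.2) :=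
      fun ij _ => smul_mul_assoc _ _ _
    rw [Finset.sum_congr rfl h1, ← key_expand d hleib (wseq d y 1) x N, cseq]
    refine Finset.sum_congr rfl fun jm _ => ?_
    rw [wseq_mul d hleib hdx jm.2]
  have hExU : ∀ m, E x * U - ∑ N ∈ range m, cseq d (wseq d y x) N ∈ F m := by
    intro m
    have h2 := hcauchy m
    have e : (∑ N ∈ range m, ∑ ij ∈ Finset.HasAntidiagonal.antidiagonal N,
          ((ij.1.factorial : K)⁻¹ • (d ^ ij.1) x) * cseq d (wseq d y 1) ij.2)
        = ∑ N ∈ range m, cseq d (wseq d y x) N :=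
      Finset.sum_congr rfl fun N _ => hqb N
    rwa [e] at h2
  have hUx : ∀ m, U * x - ∑ N ∈ range m, cseq d (wseq d y x) N ∈ F m := by
    intro m
    have h1 : (U - ∑ N ∈ range m, cseq d (wseq d y 1) N) * x ∈ F m :=
      mul_mem_right hF0 hFmul x (hU m)
    rw [sub_mul, Finset.sum_mul,
      Finset.sum_congr rfl (fun N (_ : N ∈ range m) => hab N)] at h1
    exact h1
  have hmain : E x * U = U * x := by
    refine sepF hFsep fun m => ?_
    have h3 := Submodule.sub_mem _ (hExU m) (hUx m)
    rwa [sub_sub_sub_cancel_right] at h3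
  obtain ⟨V, hUV, hVU⟩ := unitF hF0 hFmul hFsep hFcomplete hU1
  obtain ⟨W, hW1, hWexp⟩ := exp_surjF hF0 hFanti hFmul hFsep hFcomplete hU1
  refine ⟨⟨U, V, hUV, hVU⟩, W, hW1, hWexp, ?_⟩
  show E x = U * x * V
  rw [← hmain, mul_assoc, hUV, mul_one]

end ExpSpecialAux

/-- The exponential of a special derivation is a special automorphism:
in a complete separated filtered algebra `A` (modelling the completed universal
enveloping algebra of the degree-completed free Lie algebra, with the generators
`X_1, …, X_n` of degree one), if `d` is a derivation raising the filtration degree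
which is special (`d(X_i) = ⁅Y_i, X_i⁆` and `d(X_1 + ⋯ + X_n) = 0`), then
`E = exp(d) = ∑ d^m/m!` satisfies `E(X_i) = U_i X_i U_i⁻¹` for some invertible
group-like `U_i = exp(W_i)` with `W_i` of degree ≥ 1, and
`E(X_1 + ⋯ + X_n) = X_1 + ⋯ + X_n`. -/
theorem exp_special_derivation_is_special_automorphism
    (K A : Type*) [Field K] [CharZero K] [Ring A] [Algebra K A] (n : ℕ)
    (F : ℕ → Submodule K A)
    (hF0 : F 0 = ⊤)
    (hFanti : ∀ {m l : ℕ}, m ≤ l → F l ≤ F m)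
    (hFmul : ∀ {m l : ℕ} (a b : A), a ∈ F m → b ∈ F l → a * b ∈ F (m + l))
    (hFsep : (⨅ m, F m) = ⊥)
    (hFcomplete : ∀ c : ℕ → A, (∀ m, c (m + 1) - c m ∈ F m) →
      ∃ x : A, ∀ m, x - c m ∈ F m)
    (X Y : Fin n → A) (hX : ∀ i, X i ∈ F 1) (hY : ∀ i, Y i ∈ F 1)
    (d : A →ₗ[K] A)
    (hleib : ∀ a b : A, d (a * b) = d a * b + a * d b)
    (hdeg : ∀ m : ℕ, ∀ a ∈ F m, d a ∈ F (m + 1))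
    (htan : ∀ i, d (X i) = Y i * X i - X i * Y i)
    (hspec : d (∑ i, X i) = 0)
    (E : A →ₗ[K] A)
    (hE : ∀ (a : A) (m : ℕ),
      E a - ∑ j ∈ range m, ((j.factorial : K)⁻¹) • ((d ^ j) a) ∈ F m) :
    (∀ i, ∃ (U : Aˣ) (W : A), W ∈ F 1 ∧
        (∀ m : ℕ, (U : A) - ∑ j ∈ range m, ((j.factorial : K)⁻¹) • W ^ j ∈ F m) ∧
        E (X i) = (U : A) * X i * ((U⁻¹ : Aˣ) : A)) ∧
      E (∑ i, X i) = ∑ i, X i := by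
  constructor
  · intro i
    exact ExpSpecialAux.conjF hF0 hFanti hFmul hFsep hFcomplete d hleib hdeg
      (hX i) (hY i) (htan i) E hE
  · have hd : ∀ j : ℕ, (d ^ (j + 1)) (∑ i, X i) = 0 := by
      intro j
      rw [ExpSpecialAux.dpow_apply_succ, hspec, map_zero]
    refine ExpSpecialAux.sepF hFsep fun m => ?_
    match m with
    | 0 => exact ExpSpecialAux.memF0 hF0 _
    | (m + 1) =>
      have h := hE (∑ i, X i) (m + 1)
      have e : (∑ j ∈ range (m + 1), (j.factorial : K)⁻¹ • (d ^ j) (∑ i, X i))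
          = ∑ i, X i := by
        rw [Finset.sum_range_succ']
        simp [hd]
      rwa [e] at h
end

section
/- If φ and φ' are automorphisms of the free Lie algebra quotient L/L_{≥ 2k} that act as the identity on the quotient L_{≥k}/L_{≥2k}, and each sends X_i to exp(Y_i) X_i exp(Y_i)^{-1} with Y_i, Y_i' ∈ L_{≥k}/L_{≥2k}, then the composite φ∘φ' sends X_i to exp(Z_i) X_i exp(Z_i)^{-1} with Z_i ≡ Y_i + Y_i' mod L_{≥2k}. -/
/-- If `φ, φ'` are automorphisms of the free Lie algebra quotient `L/L_{≥2k}`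
(modelled inside a filtered algebra `A`, filtration `F`, working modulo `F (2k)`)
acting as the identity on `L_{≥k}/L_{≥2k}`, and each sends `X_i` to
`exp(Y_i) X_i exp(Y_i)⁻¹` resp. `exp(Y'_i) X_i exp(Y'_i)⁻¹` with `Y_i, Y'_i` of
degree ≥ k (note `exp(Y) ≡ 1 + Y mod F (2k)` for `Y ∈ F k`), then the composite
`φ ∘ φ'` sends `X_i` to `exp(Z_i) X_i exp(Z_i)⁻¹` with
`Z_i ≡ Y_i + Y'_i mod L_{≥2k}`. -/
theorem composite_conjugators_additive_mod_2k
    (K A : Type*) [Field K] [CharZero K] [Ring A] [Algebra K A] (n : ℕ)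
    (k : ℕ) (hk : 1 ≤ k)
    (F : ℕ → Submodule K A)
    (hFanti : ∀ {m l : ℕ}, m ≤ l → F l ≤ F m)
    (hFmul : ∀ {m l : ℕ} (a b : A), a ∈ F m → b ∈ F l → a * b ∈ F (m + l))
    (X : Fin n → A) (hX : ∀ i, X i ∈ F 1)
    (φ φ' : A ≃ₐ[K] A)
    (hφF : ∀ m : ℕ, ∀ a ∈ F m, φ a ∈ F m)
    (hφ'F : ∀ m : ℕ, ∀ a ∈ F m, φ' a ∈ F m)
    (hφid : ∀ a ∈ F k, φ a - a ∈ F (2 * k))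
    (hφ'id : ∀ a ∈ F k, φ' a - a ∈ F (2 * k))
    (Y Y' : Fin n → A) (hY : ∀ i, Y i ∈ F k) (hY' : ∀ i, Y' i ∈ F k)
    (u u' : Fin n → Aˣ)
    (hu : ∀ i, (u i : A) - 1 - Y i ∈ F (2 * k))
    (hu' : ∀ i, (u' i : A) - 1 - Y' i ∈ F (2 * k))
    (hφX : ∀ i, φ (X i) = (u i : A) * X i * (((u i)⁻¹ : Aˣ) : A))
    (hφ'X : ∀ i, φ' (X i) = (u' i : A) * X i * (((u' i)⁻¹ : Aˣ) : A)) :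
    ∃ (v : Fin n → Aˣ) (Z : Fin n → A),
      (∀ i, Z i ∈ F k) ∧
      (∀ i, (v i : A) - 1 - Z i ∈ F (2 * k)) ∧
      (∀ i, φ (φ' (X i)) = (v i : A) * X i * (((v i)⁻¹ : Aˣ) : A)) ∧
      (∀ i, Z i - (Y i + Y' i) ∈ F (2 * k)) := by
  classical
  have hk2 : k ≤ 2 * k := by omega
  set ψ : Aˣ →* Aˣ := Units.map (φ : A →* A) with hψ
  refine ⟨fun i => ψ (u' i) * u i, fun i => Y i + Y' i,
    fun i => (F k).add_mem (hY i) (hY' i), ?_, ?_, fun i => by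
      simpa using (F (2 * k)).zero_mem⟩
  · intro i
    have hu1 : (u i : A) - 1 ∈ F k := by
      have := (F k).add_mem ((hFanti hk2) (hu i)) (hY i)
      simpa [sub_add_cancel] using this
    have hu'1 : (u' i : A) - 1 ∈ F k := by
      have := (F k).add_mem ((hFanti hk2) (hu' i)) (hY' i)
      simpa [sub_add_cancel] using this
    have hφu' : (ψ (u' i) : A) - 1 ∈ F k := by
      have : φ ((u' i : A) - 1) ∈ F k := hφF k _ hu'1
      simpa [hψ, map_sub, map_one] using this
    have hprod : ((ψ (u' i) : A) - 1) * ((u i : A) - 1) ∈ F (2 * k) := by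
      have := hFmul _ _ hφu' hu1
      simpa [two_mul] using this
    have hφdiff : (ψ (u' i) : A) - 1 - ((u' i : A) - 1) ∈ F (2 * k) := by
      have := hφid _ hu'1
      simpa [hψ, map_sub, map_one, sub_sub_sub_cancel_right] using this
    have key : ((ψ (u' i) * u i : Aˣ) : A) - 1 - (Y i + Y' i)
        = ((ψ (u' i) : A) - 1) * ((u i : A) - 1)
          + ((ψ (u' i) : A) - 1 - ((u' i : A) - 1))
          + ((u i : A) - 1 - Y i) + ((u' i : A) - 1 - Y' i) := by
      push_cast
      noncomm_ring
    rw [key]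
    exact (F (2*k)).add_mem ((F (2*k)).add_mem ((F (2*k)).add_mem hprod hφdiff) (hu i)) (hu' i)
  · intro i
    rw [hφ'X i, map_mul, map_mul, hφX i]
    push_cast [hψ]
    simp [mul_assoc]
end

section
/- For a connected tree Jacobi diagram T with H-colored univalent vertices, the element Σ_v col(v) ⊗ comm(T_v) ∈ H ⊗ L(H) (sum over univalent vertices v, where T_v is T rooted at v) lies in the kernel D(H) of the bracket map H ⊗ L(H) → L(H). -/
open scoped TensorProduct

/-- Rooted planar binary trees with leaves colored by `H`, encoding connected tree
Jacobi diagrams with `H`-colored univalent vertices (a diagram is a pair of a color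
`h : H` for one distinguished univalent vertex together with the rooted tree hanging
from it). -/
inductive JTree (H : Type*) : Type _ where
  | leaf : H → JTree H
  | node : JTree H → JTree H → JTree H

/-- The Lie element `comm(T)` associated to a rooted tree, via a linear embedding
`ι : H →ₗ L` of the colors in degree one. -/
noncomputable def JTree.comm {K H L : Type*} [Field K] [AddCommGroup H] [Module K H]
    [LieRing L] [LieAlgebra K L] (ι : H →ₗ[K] L) : JTree H → L
  | .leaf h => ι h
  | .node l r => ⁅JTree.comm ι l, JTree.comm ι r⁆

/-- Rerooting: `reroot t u` lists, for each leaf `v` of `t` (with its color), the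
rooted tree obtained by rerooting the unrooted tree `t ∪ u` at `v`, following the
cyclic orientation at each trivalent vertex. -/
def JTree.reroot {H : Type*} : JTree H → JTree H → List (H × JTree H)
  | .leaf a, u => [(a, u)]
  | .node l r, u => JTree.reroot l (.node r u) ++ JTree.reroot r (.node u l)

/-- The bracket map `H ⊗ L → L`, `X ⊗ Y ↦ ⁅X, Y⁆`. -/
noncomputable def bracketMap (K : Type*) [Field K]
    {H L : Type*} [AddCommGroup H] [Module K H] [LieRing L] [LieAlgebra K L]
    (ι : H →ₗ[K] L) : H ⊗[K] L →ₗ[K] L :=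
  TensorProduct.lift
    { toFun := fun h =>
        { toFun := fun y => ⁅ι h, y⁆
          map_add' := fun a b => lie_add (ι h) a b
          map_smul' := fun c a => lie_smul c (ι h) a }
      map_add' := by intro a b; ext y; simp [add_lie]
      map_smul' := by intro c a; ext y; simp [smul_lie] }

/-- For a connected tree Jacobi diagram `T` with `H`-colored univalent vertices
(encoded by a color `h` and a rooted tree `t`), the element
`∑_v col(v) ⊗ comm(T_v) ∈ H ⊗ L(H)` (sum over all univalent vertices `v`, where
`T_v` is `T` rooted at `v`) lies in the kernel `D(H)` of the bracket map
`H ⊗ L(H) → L(H)`. -/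
theorem treeDiagram_mem_ker_bracketMap
    (K : Type*) [Field K] [CharZero K] (n : ℕ)
    (H : Type*) [AddCommGroup H] [Module K H] (b : Module.Basis (Fin n) K H)
    (h : H) (t : JTree H) :
    (h ⊗ₜ[K] JTree.comm ((b.constr K) fun i => FreeLieAlgebra.of K i) t +
        ((JTree.reroot t (.leaf h)).map fun p =>
          p.1 ⊗ₜ[K] JTree.comm ((b.constr K) fun i => FreeLieAlgebra.of K i) p.2).sum) ∈
      LinearMap.ker (bracketMap K ((b.constr K) fun i => FreeLieAlgebra.of K i)) := by
  set ι := (b.constr K) fun i => FreeLieAlgebra.of K i with hι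
  have key : ∀ (t u : JTree H),
      ((JTree.reroot t u).map fun p =>
        ⁅ι p.1, JTree.comm ι p.2⁆).sum = ⁅JTree.comm ι t, JTree.comm ι u⁆ := by
    intro t
    induction t with
    | leaf a => intro u; simp [JTree.reroot, JTree.comm]
    | node l r ihl ihr =>
      intro u
      simp only [JTree.reroot, List.map_append, List.sum_append, ihl, ihr, JTree.comm]
      rw [leibniz_lie (JTree.comm ι l) (JTree.comm ι r) (JTree.comm ι u), add_assoc, ← lie_add, ← lie_skew (JTree.comm ι l) (JTree.comm ι u), neg_add_cancel, lie_zero, add_zero]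
  have eval : ∀ (x : H) (y : FreeLieAlgebra K (Fin n)),
      bracketMap K ι (x ⊗ₜ[K] y) = ⁅ι x, y⁆ := fun x y => rfl
  rw [LinearMap.mem_ker, map_add, eval, map_list_sum]
  have : (List.map (⇑(bracketMap K ι))
      ((JTree.reroot t (.leaf h)).map fun p => p.1 ⊗ₜ[K] JTree.comm ι p.2)).sum
      = ((JTree.reroot t (.leaf h)).map fun p => ⁅ι p.1, JTree.comm ι p.2⁆).sum := by
    rw [List.map_map]; rfl
  rw [this, key t (.leaf h)]
  show ⁅ι h, JTree.comm ι t⁆ + ⁅JTree.comm ι t, JTree.comm ι (.leaf h)⁆ = 0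
  show ⁅ι h, JTree.comm ι t⁆ + ⁅JTree.comm ι t, ι h⁆ = 0
  rw [← lie_skew (ι h) (JTree.comm ι t), neg_add_cancel]
end
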